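/- arXiv:1206.0387 — 10 statements merged into one kernel-verified Lean document; each statement's English description precedes it below -/
import Mathlib

section
/- If p is a convex combination p = ∑_{j=1}^k α_j q^{(j)} of product distributions q^{(j)} on {0,1}^n (α_j ≥ 0, ∑ α_j = 1), and x is a strong mode of p (i.e., p(x) > ∑_{y: d_H(x,y)=1} p(y)), then x is a mode of at least one mixture component q^{(j)} with α_j > 0. -/
/-!
Expanding the strong-mode inequality `∑_{y ~ x} p y < p x` over the mixture, some component
`j` must satisfy `α j * ∑_{y ~ x} q j y < α j * q j x`. This forces `α j > 0`, and since `q j`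
is nonnegative, each single neighbour value `q j y` is at most the neighbourhood sum, hence
below `q j x`.
-/

open Finset

theorem exists_pos_weight_sum_lt_of_mixture_sum_lt {ι X : Type*} (s : Finset ι) (S : Finset X)
    (α : ι → ℝ) (hα : ∀ j, 0 ≤ α j) (q : ι → X → ℝ) (x : X)
    (h : ∑ y ∈ S, ∑ j ∈ s, α j * q j y < ∑ j ∈ s, α j * q j x) :
    ∃ j ∈ s, 0 < α j ∧ ∑ y ∈ S, q j y < q j x := by
  rw [sum_comm] at h
  simp_rw [← mul_sum] at h
  obtain ⟨j, hjs, hj⟩ := exists_lt_of_sum_lt h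
  have hαj : 0 < α j := by
    rcases (hα j).eq_or_lt with hzero | hpos
    · simp [← hzero] at hj
    · exact hpos
  exact ⟨j, hjs, hαj, lt_of_mul_lt_mul_left hj hαj.le⟩

theorem strong_mode_is_mode_of_component_general
    (n k : ℕ) (α : Fin k → ℝ) (hα0 : ∀ j, 0 ≤ α j)
    (q : Fin k → (Fin n → Bool) → ℝ)
    (hq : ∀ j, ∃ f : Fin n → Bool → ℝ, (∀ i b, 0 ≤ f i b) ∧
      (∀ i, f i false + f i true = 1) ∧ ∀ x, q j x = ∏ i, f i (x i))
    (p : (Fin n → Bool) → ℝ) (hp : ∀ x, p x = ∑ j, α j * q j x)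
    (x : Fin n → Bool)
    (hx : ∑ y ∈ Finset.univ.filter (fun y => hammingDist x y = 1), p y < p x) :
    ∃ j, 0 < α j ∧ ∀ y, hammingDist x y = 1 → q j y < q j x := by
  simp only [hp] at hx
  obtain ⟨j, -, hαj, hsum⟩ := exists_pos_weight_sum_lt_of_mixture_sum_lt _ _ α hα0 q x hx
  obtain ⟨f, hf0, -, hfq⟩ := hq j
  have hq_nonneg : ∀ z, 0 ≤ q j z := fun z => hfq z ▸ prod_nonneg fun i _ => hf0 i (z i)
  exact ⟨j, hαj, fun y hy =>
    (single_le_sum (fun z _ => hq_nonneg z) (mem_filter.2 ⟨mem_univ y, hy⟩)).trans_lt hsum⟩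

/-- If `p = ∑ j, α j • q j` is a convex combination of product distributions on `{0,1}^n`
and `x` is a strong mode of `p`, then `x` is a mode of some component `q j` with `α j > 0`. -/
theorem strong_mode_is_mode_of_component
    (n k : ℕ) (α : Fin k → ℝ) (hα0 : ∀ j, 0 ≤ α j) (hα1 : ∑ j, α j = 1)
    (q : Fin k → (Fin n → Bool) → ℝ)
    (hq : ∀ j, ∃ f : Fin n → Bool → ℝ, (∀ i b, 0 ≤ f i b) ∧
      (∀ i, f i false + f i true = 1) ∧ ∀ x, q j x = ∏ i, f i (x i))
    (p : (Fin n → Bool) → ℝ) (hp : ∀ x, p x = ∑ j, α j * q j x)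
    (x : Fin n → Bool)
    (hx : ∑ y ∈ Finset.univ.filter (fun y => hammingDist x y = 1), p y < p x) :
    ∃ j, 0 < α j ∧ ∀ y, hammingDist x y = 1 → q j y < q j x :=
  strong_mode_is_mode_of_component_general n k α hα0 q hq p hp x hx
end

section
/- A mixture of k product distributions on {0,1}^n has at most k strong modes. -/
/-!
A strong mode `x` of a product distribution `∏ i, f i (y i)` beats its neighbour obtained by
changing the single coordinate `i`; cancelling the common factor `∏_{j ≠ i} f j (x j)` shows
that `x i` is the strict maximiser of the marginal `f i`, so a product distribution has at most
one strong mode. Being a strong mode is the positivity of a linear functional of the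
distribution, so a strong mode of a nonnegative combination `∑ j, α j * q j` is a strong mode of
some component `q j`: the strong modes of the mixture lie in a union of `k` sets with at most
one element each.
-/

open Finset

section StrongMode

variable {ι β : Type*} [Fintype ι] [DecidableEq ι] [DecidableEq β]

theorem hammingDist_update_self {x : ι → β} {i : ι} {b : β} (hb : b ≠ x i) :
    hammingDist x (Function.update x i b) = 1 := by
  have : univ.filter (fun j => x j ≠ Function.update x i b j) = {i} := by
    ext j
    by_cases hj : j = i
    · subst hj; simp [hb.symm]
    · simp [hj]
  rw [hammingDist, this, card_singleton]

variable [Fintype β]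

def hammingNeighbours (x : ι → β) : Finset (ι → β) :=
  univ.filter (fun y => hammingDist x y = 1)

def IsStrongMode (p : (ι → β) → ℝ) (x : ι → β) : Prop :=
  ∑ y ∈ hammingNeighbours x, p y < p x

theorem update_mem_hammingNeighbours {x : ι → β} {i : ι} {b : β} (hb : b ≠ x i) :
    Function.update x i b ∈ hammingNeighbours x :=
  mem_filter.mpr ⟨mem_univ _, hammingDist_update_self hb⟩

theorem IsStrongMode.exists_of_sum {κ : Type*} {s : Finset κ} {α : κ → ℝ}
    {q : κ → (ι → β) → ℝ} (hα : ∀ j ∈ s, 0 ≤ α j) {x : ι → β}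
    (hx : IsStrongMode (fun y => ∑ j ∈ s, α j * q j y) x) :
    ∃ j ∈ s, IsStrongMode (q j) x := by
  by_contra! h
  refine (hx.trans_le ?_).false
  calc ∑ j ∈ s, α j * q j x
      ≤ ∑ j ∈ s, α j * ∑ y ∈ hammingNeighbours x, q j y :=
        sum_le_sum fun j hj => mul_le_mul_of_nonneg_left (not_lt.mp (h j hj)) (hα j hj)
    _ = ∑ y ∈ hammingNeighbours x, ∑ j ∈ s, α j * q j y := by
        simp only [mul_sum]
        exact sum_comm

theorem IsStrongMode.lt_of_prod {f : ι → β → ℝ} (hf : ∀ i b, 0 ≤ f i b) {x : ι → β}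
    (hx : IsStrongMode (fun y => ∏ i, f i (y i)) x) {i : ι} {b : β} (hb : b ≠ x i) :
    f i b < f i (x i) := by
  refine lt_of_mul_lt_mul_right ?_ (prod_nonneg (s := univ \ {i}) fun j _ => hf j (x j))
  calc f i b * ∏ j ∈ univ \ {i}, f j (x j)
      = ∏ j, f j (Function.update x i b j) := by
        simp only [Function.apply_update (fun j => f j), prod_update_of_mem (mem_univ i)]
    _ ≤ ∑ y ∈ hammingNeighbours x, ∏ j, f j (y j) :=
        single_le_sum (fun y _ => prod_nonneg fun j _ => hf j (y j))
          (update_mem_hammingNeighbours hb)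
    _ < ∏ j, f j (x j) := hx
    _ = f i (x i) * ∏ j ∈ univ \ {i}, f j (x j) :=
        prod_eq_mul_prod_sdiff_singleton_of_mem (mem_univ i) _

theorem subsingleton_setOf_isStrongMode_prod {f : ι → β → ℝ} (hf : ∀ i b, 0 ≤ f i b) :
    {x | IsStrongMode (fun y => ∏ i, f i (y i)) x}.Subsingleton := by
  intro x hx x' hx'
  funext i
  by_contra hne
  exact (hx.lt_of_prod hf (Ne.symm hne)).asymm (hx'.lt_of_prod hf hne)

end StrongMode

theorem Set.ncard_le_card_of_subset_iUnion_subsingleton {α κ : Type*} [Finite κ]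
    {S : Set α} {T : κ → Set α} (hT : ∀ j, (T j).Subsingleton) (hS : S ⊆ ⋃ j, T j) :
    S.ncard ≤ Nat.card κ := by
  choose g hg using fun x : S => Set.mem_iUnion.mp (hS x.2)
  refine Nat.card_le_card_of_injective g fun x x' h => Subtype.ext ?_
  exact hT (g x) (hg x) (h ▸ hg x')

theorem mixture_at_most_k_strong_modes_general
    (n k : ℕ) (α : Fin k → ℝ) (hα0 : ∀ j, 0 ≤ α j)
    (q : Fin k → (Fin n → Bool) → ℝ)
    (hq : ∀ j, ∃ f : Fin n → Bool → ℝ, (∀ i b, 0 ≤ f i b) ∧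
      (∀ i, f i false + f i true = 1) ∧ ∀ x, q j x = ∏ i, f i (x i))
    (p : (Fin n → Bool) → ℝ) (hp : ∀ x, p x = ∑ j, α j * q j x) :
    {x : Fin n → Bool |
      ∑ y ∈ Finset.univ.filter (fun y => hammingDist x y = 1), p y < p x}.ncard ≤ k := by
  obtain rfl : p = fun y => ∑ j, α j * q j y := funext hp
  have hmodes : ∀ j, {x | IsStrongMode (q j) x}.Subsingleton := by
    intro j
    obtain ⟨f, hf, -, hqf⟩ := hq j
    rw [show q j = fun y => ∏ i, f i (y i) from funext hqf]
    exact subsingleton_setOf_isStrongMode_prod hf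
  have hcover : {x | IsStrongMode (fun y => ∑ j, α j * q j y) x}
      ⊆ ⋃ j, {x | IsStrongMode (q j) x} := fun x hx =>
    let ⟨j, _, hj⟩ := IsStrongMode.exists_of_sum (fun j _ => hα0 j) hx
    Set.mem_iUnion.mpr ⟨j, hj⟩
  calc _ ≤ Nat.card (Fin k) := Set.ncard_le_card_of_subset_iUnion_subsingleton hmodes hcover
    _ = k := Nat.card_fin k

/-- A mixture of `k` product distributions on `{0,1}^n` has at most `k` strong modes. -/
theorem mixture_at_most_k_strong_modes
    (n k : ℕ) (α : Fin k → ℝ) (hα0 : ∀ j, 0 ≤ α j) (hα1 : ∑ j, α j = 1)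
    (q : Fin k → (Fin n → Bool) → ℝ)
    (hq : ∀ j, ∃ f : Fin n → Bool → ℝ, (∀ i b, 0 ≤ f i b) ∧
      (∀ i, f i false + f i true = 1) ∧ ∀ x, q j x = ∏ i, f i (x i))
    (p : (Fin n → Bool) → ℝ) (hp : ∀ x, p x = ∑ j, α j * q j x) :
    {x : Fin n → Bool |
      ∑ y ∈ Finset.univ.filter (fun y => hammingDist x y = 1), p y < p x}.ncard ≤ k :=
  mixture_at_most_k_strong_modes_general n k α hα0 q hq p hp
end

section
/- The only two subsets of {0,1}^n of cardinality 2^{n-1} with minimum pairwise Hamming distance at least two are the set of even-weight vectors and the set of odd-weight vectors. -/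
/-!
Flipping a coordinate moves every point of `C` to distance one, hence out of `C`; so it maps `C`
injectively into its complement, and by counting onto it. Thus `C` contains exactly one endpoint
of every edge of the cube, and membership in `C` alternates along any monotone path from the
origin to `x`, i.e. it is decided by the parity of the weight of `x`.
-/

open Finset Function

namespace ParityCode

variable {ι : Type*} [DecidableEq ι]

def flipCoord (i : ι) (x : ι → Bool) : ι → Bool := update x i (!x i)

theorem flipCoord_involutive (i : ι) : Involutive (flipCoord i) := by
  intro x
  ext k
  by_cases hk : k = i <;> simp [flipCoord, update_apply, hk]

variable [Fintype ι]

theorem hammingDist_flipCoord (i : ι) (x : ι → Bool) : hammingDist x (flipCoord i x) = 1 := by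
  rw [hammingDist, card_eq_one]
  refine ⟨i, ?_⟩
  ext k
  by_cases hk : k = i <;> simp [flipCoord, update_apply, hk]

variable {C : Finset (ι → Bool)}

theorem flipCoord_notMem_of_mem (hdist : ∀ x ∈ C, ∀ y ∈ C, x ≠ y → 2 ≤ hammingDist x y)
    {x : ι → Bool} (hx : x ∈ C) (i : ι) : flipCoord i x ∉ C := by
  intro hflip
  have hne : x ≠ flipCoord i x :=
    hammingDist_pos.mp (by rw [hammingDist_flipCoord]; exact one_pos)
  have := hdist x hx _ hflip hne
  rw [hammingDist_flipCoord] at this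
  omega

theorem flipCoord_mem_iff (hcard : #C = 2 ^ (Fintype.card ι - 1))
    (hdist : ∀ x ∈ C, ∀ y ∈ C, x ≠ y → 2 ≤ hammingDist x y) (i : ι) (x : ι → Bool) :
    flipCoord i x ∈ C ↔ x ∉ C := by
  have hflip := flipCoord_involutive i
  have himage : C.image (flipCoord i) = Cᶜ := by
    refine eq_of_subset_of_card_le ?_ ?_
    · intro y hy
      obtain ⟨c, hc, rfl⟩ := mem_image.mp hy
      exact mem_compl.mpr (flipCoord_notMem_of_mem hdist hc i)
    · have hpos : 0 < Fintype.card ι := Fintype.card_pos_iff.mpr ⟨i⟩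
      have hhalf : 2 ^ Fintype.card ι = 2 * 2 ^ (Fintype.card ι - 1) := by
        rw [← pow_succ', Nat.sub_add_cancel hpos]
      rw [card_image_of_injective _ hflip.injective, card_compl, Fintype.card_fun,
        Fintype.card_bool, hcard, hhalf]
      omega
  rw [← mem_compl, ← himage, mem_image]
  exact ⟨fun h => ⟨_, h, hflip x⟩, fun ⟨c, hc, hcx⟩ => hcx ▸ (hflip c).symm ▸ hc⟩

theorem mem_iff_even_card_iff (hC : ∀ i x, flipCoord i x ∈ C ↔ x ∉ C) (x : ι → Bool) :
    x ∈ C ↔ (Even #{i | x i = true} ↔ (fun _ => false) ∈ C) := by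
  suffices key : ∀ T : Finset ι,
      (fun k => decide (k ∈ T)) ∈ C ↔ (Even #T ↔ (fun _ => false) ∈ C) by
    convert key {i | x i = true} using 2
    ext k
    simp
  intro T
  induction T using Finset.induction_on with
  | empty => simp
  | insert a T ha ih =>
    have hind :
        (fun k => decide (k ∈ insert a T)) = flipCoord a (fun k => decide (k ∈ T)) := by
      ext k
      by_cases hk : k = a <;> simp [flipCoord, hk, ha]
    rw [hind, hC, ih, card_insert_of_notMem ha, Nat.even_add_one]
    tauto

end ParityCode

open ParityCode

theorem half_card_distance_two_codes_are_parity_sets_general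
    (n : ℕ) (C : Finset (Fin n → Bool))
    (hcard : C.card = 2 ^ (n - 1))
    (hdist : ∀ x ∈ C, ∀ y ∈ C, x ≠ y → 2 ≤ hammingDist x y) :
    C = Finset.univ.filter (fun x : Fin n → Bool =>
        Even (Finset.univ.filter (fun i => x i = true)).card) ∨
    C = Finset.univ.filter (fun x : Fin n → Bool =>
        Odd (Finset.univ.filter (fun i => x i = true)).card) := by
  have hflip := flipCoord_mem_iff (by rwa [Fintype.card_fin]) hdist
  by_cases h0 : (fun _ => false) ∈ C
  · left
    ext x
    simp [mem_iff_even_card_iff hflip x, h0]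
  · right
    ext x
    simp [mem_iff_even_card_iff hflip x, h0, Nat.not_even_iff_odd]

/-- The only two subsets of `{0,1}^n` of cardinality `2^(n-1)` with minimum pairwise
Hamming distance at least two are the even-weight vectors and the odd-weight vectors. -/
theorem half_card_distance_two_codes_are_parity_sets
    (n : ℕ) (hn : 1 ≤ n) (C : Finset (Fin n → Bool))
    (hcard : C.card = 2 ^ (n - 1))
    (hdist : ∀ x ∈ C, ∀ y ∈ C, x ≠ y → 2 ≤ hammingDist x y) :
    C = Finset.univ.filter (fun x : Fin n → Bool =>
        Even (Finset.univ.filter (fun i => x i = true)).card) ∨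
    C = Finset.univ.filter (fun x : Fin n → Bool =>
        Odd (Finset.univ.filter (fun i => x i = true)).card) :=
  half_card_distance_two_codes_are_parity_sets_general n C hcard hdist
end

section
/- If p is a probability distribution on {0,1}^n (n ≥ 2) whose set of modes is exactly the set of even-weight vectors, then for each fixed value x_1 = 0 the conditional distribution p(x_2,...,x_n | x_1 = 0) has as modes exactly the even-weight vectors of {0,1}^{n-1}, and for x_1 = 1 exactly the odd-weight vectors of {0,1}^{n-1}. -/
lemma dist_cons {m : ℕ} (b : Bool) (y z : Fin m → Bool) :
    hammingDist (Fin.cons b y : Fin (m+1) → Bool) (Fin.cons b z) = hammingDist y z := by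
  simp only [hammingDist, Finset.card_filter, Fin.sum_univ_succ, Fin.cons_succ, Fin.cons_zero]
  simp

lemma weight_cons {m : ℕ} (b : Bool) (y : Fin m → Bool) :
    (Finset.univ.filter (fun i => (Fin.cons b y : Fin (m+1) → Bool) i = true)).card
      = (if b then 1 else 0) + (Finset.univ.filter (fun i => y i = true)).card := by
  simp only [Finset.card_filter, Fin.sum_univ_succ, Fin.cons_succ, Fin.cons_zero]

lemma dist_update {m : ℕ} (y : Fin m → Bool) (i : Fin m) :
    hammingDist y (Function.update y i (!(y i))) = 1 := by
  unfold hammingDist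
  rw [show ({j | y j ≠ Function.update y i (!(y i)) j} : Finset (Fin m)) = {i} from ?_]
  · simp
  · ext j
    by_cases h : j = i <;> simp [h, Function.update_apply]

lemma weight_update {m : ℕ} (y : Fin m → Bool) (i : Fin m) :
    Even (Finset.univ.filter (fun j => Function.update y i (!(y i)) j = true)).card
      ↔ ¬ Even (Finset.univ.filter (fun j => y j = true)).card := by
  rw [Finset.card_filter, Finset.card_filter]
  have h1 : (fun j => if Function.update y i (!(y i)) j = true then (1:ℕ) else 0)
      = Function.update (fun j => if y j = true then (1:ℕ) else 0) i (if !(y i) then 1 else 0) := by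
    funext j
    by_cases h : j = i <;> simp [h, Function.update_apply]
  rw [h1, Finset.sum_update_of_mem (Finset.mem_univ i),
    show (Finset.univ : Finset (Fin m)) = insert i ((Finset.univ : Finset (Fin m)).erase i) from
      (Finset.insert_erase (Finset.mem_univ i)).symm,
    Finset.sum_insert (Finset.notMem_erase i _), Finset.sdiff_singleton_eq_erase]
  cases h : y i <;> simp [Nat.even_add, parity_simps]

lemma key_mode {m : ℕ} (hm : 1 ≤ m) (p : (Fin (m + 1) → Bool) → ℝ)
    (hmodes : ∀ x : Fin (m + 1) → Bool,
      (∀ y, hammingDist x y = 1 → p y < p x) ↔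
        Even (Finset.univ.filter (fun i => x i = true)).card)
    (b : Bool) (y : Fin m → Bool) :
    (∀ z, hammingDist y z = 1 → p (Fin.cons b z) < p (Fin.cons b y)) ↔
      Even ((Finset.univ.filter fun i => (Fin.cons b y : Fin (m+1) → Bool) i = true).card) := by
  constructor
  · intro h
    by_contra hodd
    set i0 : Fin m := ⟨0, hm⟩
    set z := Function.update y i0 (!(y i0)) with hz
    have hdz : hammingDist y z = 1 := dist_update y i0
    have heven : Even ((Finset.univ.filter
        fun i => (Fin.cons b z : Fin (m+1) → Bool) i = true).card) := by
      rw [weight_cons] at hodd ⊢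
      have hw := weight_update y i0
      cases b <;> simp_all [Nat.even_add, parity_simps]
    have h1 := (hmodes _).mpr heven (Fin.cons b y)
      (by rw [dist_cons, hammingDist_comm]; exact hdz)
    exact absurd (h z hdz) (not_lt.mpr h1.le)
  · intro h z hdz
    exact (hmodes _).mpr h (Fin.cons b z) (by rw [dist_cons]; exact hdz)

/-- If the set of modes of a distribution `p` on `{0,1}^(m+1)` is exactly the set of
even-weight vectors, then the conditional distribution given `x₁ = 0` has as modes exactly
the even-weight vectors of `{0,1}^m`, and the conditional given `x₁ = 1` exactly the
odd-weight vectors. -/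
theorem conditional_modes_of_parity_distribution
    (m : ℕ) (hm : 1 ≤ m) (p : (Fin (m + 1) → Bool) → ℝ)
    (hp0 : ∀ x, 0 ≤ p x) (hp1 : ∑ x, p x = 1)
    (hmodes : ∀ x : Fin (m + 1) → Bool,
      (∀ y, hammingDist x y = 1 → p y < p x) ↔
        Even (Finset.univ.filter (fun i => x i = true)).card)
    (hZ0 : 0 < ∑ y : Fin m → Bool, p (Fin.cons false y))
    (hZ1 : 0 < ∑ y : Fin m → Bool, p (Fin.cons true y)) :
    (∀ y : Fin m → Bool,
      (∀ z, hammingDist y z = 1 →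
          p (Fin.cons false z) / (∑ w : Fin m → Bool, p (Fin.cons false w)) <
          p (Fin.cons false y) / (∑ w : Fin m → Bool, p (Fin.cons false w))) ↔
        Even (Finset.univ.filter (fun i => y i = true)).card) ∧
    (∀ y : Fin m → Bool,
      (∀ z, hammingDist y z = 1 →
          p (Fin.cons true z) / (∑ w : Fin m → Bool, p (Fin.cons true w)) <
          p (Fin.cons true y) / (∑ w : Fin m → Bool, p (Fin.cons true w))) ↔
        Odd (Finset.univ.filter (fun i => y i = true)).card) := by
  constructor
  · intro y
    rw [forall_congr' fun z => imp_congr_right fun _ => div_lt_div_iff_of_pos_right hZ0,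
      key_mode hm p hmodes false y, weight_cons]
    simp
  · intro y
    rw [forall_congr' fun z => imp_congr_right fun _ => div_lt_div_iff_of_pos_right hZ1,
      key_mode hm p hmodes true y, weight_cons]
    simp [Nat.even_add_one, Nat.odd_iff, Nat.even_iff]
    omega
end

section
/- If n > 1 is odd, there is no affine map ψ: ℝ^{n-1} → ℝ^n such that the image of the vertex set {0,1}^{n-1} under ψ has a point in every even-parity open orthant of ℝ^n (all coordinates nonzero, with an even number of positive coordinates). -/
open Finset

private def wt {N : ℕ} (s : Fin N → Bool) : ZMod 2 := ∑ j, if s j = true then 1 else 0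

private lemma even_filter_iff {N : ℕ} (s : Fin N → Bool) :
    Even ((univ.filter fun j => s j = true)).card ↔ wt s = 0 := by
  have h1 : (((univ.filter fun j => s j = true).card : ZMod 2)) = wt s := by
    rw [Finset.card_filter]
    push_cast [wt]
    rfl
  rw [even_iff_two_dvd, ← h1]
  exact (ZMod.natCast_eq_zero_iff _ 2).symm

private lemma wt_update {N : ℕ} (s : Fin N → Bool) (j0 : Fin N) :
    wt (Function.update s j0 (!s j0)) = wt s + 1 := by
  have h2 : wt s = (if s j0 = true then (1:ZMod 2) else 0)
      + ∑ j ∈ univ.erase j0, (if s j = true then (1:ZMod 2) else 0) := by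
    rw [wt, ← Finset.add_sum_erase _ _ (mem_univ j0)]
  have h3 : wt (Function.update s j0 (!s j0))
      = (if (!s j0) = true then (1:ZMod 2) else 0)
      + ∑ j ∈ univ.erase j0, (if s j = true then (1:ZMod 2) else 0) := by
    rw [wt, ← Finset.add_sum_erase _ _ (mem_univ j0), Function.update_self]
    congr 1
    refine Finset.sum_congr rfl fun j hj => ?_
    rw [Function.update_of_ne (Finset.ne_of_mem_erase hj)]
  rw [h3, h2]
  cases hs : s j0 <;> simp <;> ring_nf <;> first | rfl | (rw [add_comm]; norm_num; decide)

private lemma wt_not {N : ℕ} (s : Fin N → Bool) :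
    wt (fun j => !(s j)) = wt s + N := by
  have h : ∀ j : Fin N, (if (!s j) = true then (1:ZMod 2) else 0)
      = (if s j = true then 1 else 0) + 1 := by
    intro j; cases s j <;> decide
  rw [wt, wt]
  simp only [h, Finset.sum_add_distrib, Finset.sum_const, Finset.card_univ,
    Fintype.card_fin, nsmul_eq_mul, mul_one]


private def bflip {N : ℕ} (c : Fin N) (t : Fin N → Bool) : Fin N → Bool :=
  Function.update t c (!t c)

private lemma flip_invol {N : ℕ} (c : Fin N) (t : Fin N → Bool) : bflip c (bflip c t) = t := by
  unfold bflip
  simp [Function.update_idem]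

private lemma flip_self {N : ℕ} (c : Fin N) (t : Fin N → Bool) : bflip c t c = !t c := by
  unfold bflip; rw [Function.update_self]

private lemma flip_other {N : ℕ} {a c : Fin N} (h : a ≠ c) (t : Fin N → Bool) :
    bflip c t a = t a := by
  unfold bflip; rw [Function.update_of_ne h]

private lemma wt_flip {N : ℕ} (c : Fin N) (t : Fin N → Bool) : wt (bflip c t) = wt t + 1 :=
  wt_update t c

private lemma F_invol {N : ℕ} (s : Fin N → Bool) (j0 : Fin N) :
    Function.update (Function.update s j0 (!s j0)) j0
      (!(Function.update s j0 (!s j0) j0)) = s := by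
  simp [Function.update_idem]

private lemma invol_mem {α : Type*} [DecidableEq α] (σ : α → α) (hσ : ∀ x, σ (σ x) = x)
    (A B : Finset α) (hAB : ∀ a ∈ A, σ a ∈ B) (hcard : A.card = B.card) :
    ∀ b ∈ B, σ b ∈ A := by
  intro b hb
  have hinj : ∀ a₁ a₂, a₁ ∈ A → a₂ ∈ A → σ a₁ = σ a₂ → a₁ = a₂ := by
    intro a₁ a₂ _ _ h
    have := congrArg σ h; rwa [hσ, hσ] at this
  obtain ⟨a, ha, rfl⟩ := Finset.surj_on_of_inj_on_of_card_le (fun a _ => σ a)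
    (fun a ha => hAB a ha) hinj (le_of_eq hcard.symm) b hb
  rwa [hσ]

private theorem main_zono (n : ℕ) (hn : 1 < n) (hodd : Odd n)
    (f : Fin n → (Fin (n - 1) → Bool) → ℝ) (C : Fin n → ℝ)
    (hsum : ∀ j h, f j h + f j (fun i => !(h i)) = C j)
    (H : ∀ s : Fin n → Bool, wt s = 0 →
      ∃ h, ∀ j, (s j = true → 0 < f j h) ∧ (s j = false → f j h < 0)) : False := by
  classical
  have two_zero : (1 + 1 : ZMod 2) = 0 := by decide
  -- choice function
  let g : (Fin n → Bool) → (Fin (n - 1) → Bool) := fun s =>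
    if hs : wt s = 0 then (H s hs).choose else fun _ => false
  have hg : ∀ s, ∀ hs : wt s = 0, ∀ j,
      (s j = true → 0 < f j (g s)) ∧ (s j = false → f j (g s) < 0) := by
    intro s hs
    simp only [g, dif_pos hs]
    exact (H s hs).choose_spec
  set Es : Finset (Fin n → Bool) := univ.filter fun s => wt s = 0 with hEs
  have hmemEs : ∀ s, s ∈ Es ↔ wt s = 0 := by
    intro s; simp [hEs]
  -- injectivity of g on Es
  have hginj : ∀ s₁ s₂, s₁ ∈ Es → s₂ ∈ Es → g s₁ = g s₂ → s₁ = s₂ := by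
    intro s₁ s₂ h1 h2 heq
    by_contra hne
    have hex : ∃ j, s₁ j ≠ s₂ j := by
      by_contra hc; push_neg at hc; exact hne (funext hc)
    obtain ⟨j, hj⟩ := hex
    have hs₁ := hg s₁ ((hmemEs s₁).mp h1) j
    have hs₂ := hg s₂ ((hmemEs s₂).mp h2) j
    rw [heq] at hs₁
    cases c1 : s₁ j <;> cases c2 : s₂ j
    · exact hj (c1.trans c2.symm)
    · have := hs₁.2 c1; have := hs₂.1 c2; linarith
    · have := hs₁.1 c1; have := hs₂.2 c2; linarith
    · exact hj (c1.trans c2.symm)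
  -- cardinality of Es
  have cardEs : Es.card = 2 ^ (n - 1) := by
    have j₀ : Fin n := ⟨0, by omega⟩
    have flip_mem : ∀ x : ZMod 2, x ≠ 0 → x + 1 = 0 := by decide
    have hbij : Es.card = (univ.filter fun s : Fin n → Bool => ¬ wt s = 0).card := by
      refine Finset.card_bij' (fun s _ => bflip j₀ s)
        (fun s _ => bflip j₀ s) ?_ ?_ ?_ ?_
      · intro s hs
        rw [mem_filter]
        refine ⟨mem_univ _, ?_⟩
        rw [wt_flip, (hmemEs s).mp hs, zero_add]
        decide
      · intro s hs
        rw [mem_filter] at hs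
        rw [hmemEs, wt_flip]
        exact flip_mem _ hs.2
      · intro s _; exact flip_invol j₀ s
      · intro s _; exact flip_invol j₀ s
    have hsplit : Es.card + (univ.filter fun s : Fin n → Bool => ¬ wt s = 0).card
        = 2 ^ n := by
      rw [hEs, Finset.card_filter_add_card_filter_not]
      simp
    have hpow : 2 ^ n = 2 * 2 ^ (n - 1) := by
      conv_lhs => rw [show n = (n - 1) + 1 by omega]
      rw [pow_succ]; ring
    omega
  -- surjectivity of g onto all vertices
  have hsurj : ∀ h : Fin (n - 1) → Bool, ∃ s ∈ Es, g s = h := by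
    intro h
    have hVcard : (univ : Finset (Fin (n - 1) → Bool)).card ≤ Es.card := by
      rw [cardEs]; simp
    obtain ⟨s, hs, heq⟩ := Finset.surj_on_of_inj_on_of_card_le (fun s _ => g s)
      (fun s _ => mem_univ _) hginj hVcard h (mem_univ h)
    exact ⟨s, hs, heq.symm⟩
  -- every vertex has an (even) sign vector
  have key : ∀ h : Fin (n - 1) → Bool, ∃ s : Fin n → Bool, wt s = 0 ∧
      ∀ j, (s j = true → 0 < f j h) ∧ (s j = false → f j h < 0) := by
    intro h
    obtain ⟨s, hs, heq⟩ := hsurj h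
    exact ⟨s, (hmemEs s).mp hs, heq ▸ hg s ((hmemEs s).mp hs)⟩
  -- per-coordinate half/half counting
  have cardPN : ∀ j : Fin n,
      (univ.filter fun h : Fin (n - 1) → Bool => 0 < f j h).card
        = (univ.filter fun h : Fin (n - 1) → Bool => f j h < 0).card := by
    intro j
    have stepA : (Es.filter fun s => s j = true).card
        = (univ.filter fun h : Fin (n - 1) → Bool => 0 < f j h).card := by
      refine Finset.card_bij (fun s _ => g s) ?_ ?_ ?_
      · intro s hs
        rw [mem_filter] at hs ⊢
        exact ⟨mem_univ _, (hg s ((hmemEs s).mp hs.1) j).1 hs.2⟩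
      · intro s₁ hs₁ s₂ hs₂ heq
        exact hginj s₁ s₂ (Finset.mem_of_mem_filter _ hs₁) (Finset.mem_of_mem_filter _ hs₂) heq
      · intro h hh
        rw [mem_filter] at hh
        obtain ⟨s, hs, heq⟩ := hsurj h
        refine ⟨s, mem_filter.mpr ⟨hs, ?_⟩, heq⟩
        cases c : s j
        · have := (hg s ((hmemEs s).mp hs) j).2 c
          rw [heq] at this; linarith [hh.2]
        · rfl
    have stepB : (Es.filter fun s => s j = false).card
        = (univ.filter fun h : Fin (n - 1) → Bool => f j h < 0).card := by
      refine Finset.card_bij (fun s _ => g s) ?_ ?_ ?_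
      · intro s hs
        rw [mem_filter] at hs ⊢
        exact ⟨mem_univ _, (hg s ((hmemEs s).mp hs.1) j).2 hs.2⟩
      · intro s₁ hs₁ s₂ hs₂ heq
        exact hginj s₁ s₂ (Finset.mem_of_mem_filter _ hs₁) (Finset.mem_of_mem_filter _ hs₂) heq
      · intro h hh
        rw [mem_filter] at hh
        obtain ⟨s, hs, heq⟩ := hsurj h
        refine ⟨s, mem_filter.mpr ⟨hs, ?_⟩, heq⟩
        cases c : s j
        · rfl
        · have := (hg s ((hmemEs s).mp hs) j).1 c
          rw [heq] at this; linarith [hh.2]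
    have stepC : (Es.filter fun s => s j = true).card
        = (Es.filter fun s => s j = false).card := by
      have : Nontrivial (Fin n) := Fin.nontrivial_iff_two_le.mpr hn
      obtain ⟨j', hj'⟩ := exists_ne j
      refine Finset.card_bij' (fun s _ => bflip j' (bflip j s))
        (fun s _ => bflip j (bflip j' s)) ?_ ?_ ?_ ?_
      · intro s hs
        rw [mem_filter] at hs ⊢
        refine ⟨(hmemEs _).mpr ?_, ?_⟩
        · rw [wt_flip, wt_flip, add_assoc, two_zero, add_zero]
          exact (hmemEs s).mp hs.1
        · show bflip j' (bflip j s) j = false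
          rw [flip_other (Ne.symm hj'), flip_self, hs.2]
          rfl
      · intro s hs
        rw [mem_filter] at hs ⊢
        refine ⟨(hmemEs _).mpr ?_, ?_⟩
        · rw [wt_flip, wt_flip, add_assoc, two_zero, add_zero]
          exact (hmemEs s).mp hs.1
        · show bflip j (bflip j' s) j = true
          rw [flip_self, flip_other (Ne.symm hj'), hs.2]
          rfl
      · intro s _
        simp only [flip_invol]
      · intro s _
        simp only [flip_invol]
    rw [← stepA, ← stepB, stepC]
  -- the antipodal involution
  set σ : (Fin (n - 1) → Bool) → (Fin (n - 1) → Bool) := fun h i => !(h i) with hσdef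
  have hσ : ∀ h, σ (σ h) = h := by
    intro h; funext i; simp [hσdef]
  have claim : ∀ (j : Fin n) (h : Fin (n - 1) → Bool),
      (0 < f j h → f j (σ h) < 0) ∧ (f j h < 0 → 0 < f j (σ h)) := by
    intro j
    by_cases hC : C j ≤ 0
    · have dir : ∀ h, 0 < f j h → f j (σ h) < 0 := by
        intro h hh; have := hsum j h; simp only [hσdef]; linarith
      have conv : ∀ h, f j h < 0 → 0 < f j (σ h) := by
        intro h hh
        have := invol_mem σ hσ (univ.filter fun h => 0 < f j h)
          (univ.filter fun h => f j h < 0)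
          (fun a ha => mem_filter.mpr ⟨mem_univ _, dir a (mem_filter.mp ha).2⟩)
          (cardPN j) h (mem_filter.mpr ⟨mem_univ _, hh⟩)
        exact (mem_filter.mp this).2
      exact fun h => ⟨dir h, conv h⟩
    · push_neg at hC
      have dir : ∀ h, f j h < 0 → 0 < f j (σ h) := by
        intro h hh; have := hsum j h; simp only [hσdef]; linarith
      have conv : ∀ h, 0 < f j h → f j (σ h) < 0 := by
        intro h hh
        have := invol_mem σ hσ (univ.filter fun h => f j h < 0)
          (univ.filter fun h => 0 < f j h)
          (fun a ha => mem_filter.mpr ⟨mem_univ _, dir a (mem_filter.mp ha).2⟩)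
          (cardPN j).symm h (mem_filter.mpr ⟨mem_univ _, hh⟩)
        exact (mem_filter.mp this).2
      exact fun h => ⟨conv h, dir h⟩
  -- final parity contradiction
  obtain ⟨s, hs0, hss⟩ := key (fun _ => false)
  obtain ⟨s', hs0', hss'⟩ := key (σ (fun _ => false))
  have hcomp : ∀ j, s' j = !(s j) := by
    intro j
    cases hsj : s j
    · have h1 : f j (fun _ => false) < 0 := (hss j).2 hsj
      have h2 : 0 < f j (σ (fun _ => false)) := (claim j _).2 h1
      cases hsj' : s' j
      · have := (hss' j).2 hsj'; linarith
      · rfl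
    · have h1 : 0 < f j (fun _ => false) := (hss j).1 hsj
      have h2 : f j (σ (fun _ => false)) < 0 := (claim j _).1 h1
      cases hsj' : s' j
      · rfl
      · have := (hss' j).1 hsj'; linarith
  have hwtn : wt s' = wt s + n := by
    rw [show s' = fun j => !(s j) from funext hcomp]
    exact wt_not s
  rw [hs0, hs0', zero_add] at hwtn
  have hdvd : (2 : ℕ) ∣ n := (ZMod.natCast_eq_zero_iff n 2).mp hwtn.symm
  exact (Nat.not_even_iff_odd.mpr hodd) (even_iff_two_dvd.mpr hdvd)

/-- If `n > 1` is odd, there is no `(n-1)`-zonoset (affine image of the vertices of the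
`(n-1)`-cube) in `ℝ^n` with a point in every even-parity open orthant of `ℝ^n`. -/
theorem no_zonoset_in_all_even_orthants
    (n : ℕ) (hn : 1 < n) (hodd : Odd n)
    (W : Fin (n - 1) → Fin n → ℝ) (B : Fin n → ℝ) :
    ¬ ∀ s : Fin n → Bool, Even (Finset.univ.filter (fun j => s j = true)).card →
      ∃ h : Fin (n - 1) → Bool, ∀ j : Fin n,
        (s j = true → 0 < (∑ i, (if h i then W i j else 0)) + B j) ∧
        (s j = false → (∑ i, (if h i then W i j else 0)) + B j < 0) := by
  intro H
  refine main_zono n hn hodd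
    (fun j h => (∑ i, (if h i then W i j else 0)) + B j)
    (fun j => (∑ i, W i j) + 2 * B j) ?_ ?_
  · intro j h
    have e : ∀ i : Fin (n - 1),
        ((if h i then W i j else 0) + (if (!h i) = true then W i j else 0)) = W i j := by
      intro i; cases h i <;> simp
    have e2 : (∑ i, (if h i then W i j else 0))
        + (∑ i, (if (!h i) = true then W i j else 0)) = ∑ i, W i j := by
      rw [← Finset.sum_add_distrib]
      exact Finset.sum_congr rfl fun i _ => e i
    dsimp only
    linarith
  · intro s hs
    exact H s ((even_filter_iff s).mpr hs)
end

section
/- A d-dimensional affine subspace of ℝ^n intersects at most ∑_{i=0}^{d} C(n,i) open orthants of ℝ^n, and this bound is attained by a generic affine subspace. -/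
/-!
Split the sign patterns met by an affine subspace `s ⊆ ℝ^(n+1)` according to the first sign and
delete the first coordinate. Both halves consist of patterns met by the projection `s'` of `s`,
and a pattern of `s'` occurs in both halves only if it is met by the projection of the section
`s ∩ {x₀ = 0}`: the segment joining two witnesses crosses that hyperplane. When `s` is not parallel
to the hyperplane the section has smaller dimension, and both statements become equalities
because points of the section can be pushed off it to either side; otherwise `x₀` is constant on
`s` and at most one half is nonempty. Pascal's rule then gives the bound by induction on `n`.

The bound is attained by the vectors of values `(p(a₀), …, p(aₙ₋₁))` of the monic polynomials
`p` of degree `d`, for points `a₀ < ⋯ < aₙ₋₁`. Its section `p(a₀) = 0` consists of the values of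
`(X - a₀) q` with `q` monic of degree `d - 1`, and `X - a₀` is positive at the remaining points,
so both terms of the recursion are again of this form, now for the points `a₁, …, aₙ₋₁`.
-/

open Set Filter Topology Polynomial

section Orthant

variable {ι : Type*}

def orthant (σ : ι → Bool) : Set (ι → ℝ) :=
  univ.pi fun j => bif σ j then Ioi 0 else Iio 0

def orthantPatterns (A : Set (ι → ℝ)) : Set (ι → Bool) :=
  {σ | ∃ x ∈ A, x ∈ orthant σ}

theorem mem_orthant {σ : ι → Bool} {x : ι → ℝ} :
    x ∈ orthant σ ↔ ∀ j, (σ j = true → 0 < x j) ∧ (σ j = false → x j < 0) := by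
  refine forall_congr' fun j => ?_
  cases h : σ j <;> simp [h]

theorem isOpen_orthant [Finite ι] (σ : ι → Bool) : IsOpen (orthant σ) :=
  isOpen_set_pi finite_univ fun j _ => by cases σ j; exacts [isOpen_Iio, isOpen_Ioi]

theorem convex_orthant (σ : ι → Bool) : Convex ℝ (orthant σ) :=
  convex_pi fun j _ => by cases σ j; exacts [convex_Iio 0, convex_Ioi 0]

theorem one_mem_orthant_iff {σ : ι → Bool} : (1 : ι → ℝ) ∈ orthant σ ↔ σ = fun _ => true := by
  simp only [orthant, mem_univ_pi, funext_iff]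
  refine forall_congr' fun j => ?_
  cases σ j <;> simp

theorem mul_mem_orthant_iff {σ : ι → Bool} {c x : ι → ℝ} (hc : ∀ j, 0 < c j) :
    c * x ∈ orthant σ ↔ x ∈ orthant σ := by
  simp only [orthant, mem_univ_pi, Pi.mul_apply]
  refine forall_congr' fun j => ?_
  cases σ j
  · simpa only [cond_false, mem_Iio] using
      ⟨fun h => by nlinarith [hc j], mul_neg_of_pos_of_neg (hc j)⟩
  · simpa only [cond_true, mem_Ioi] using mul_pos_iff_of_pos_left (hc j)

theorem orthantPatterns_image_mul {c : ι → ℝ} (hc : ∀ j, 0 < c j) (A : Set (ι → ℝ)) :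
    orthantPatterns ((c * ·) '' A) = orthantPatterns A := by
  ext σ
  simp only [orthantPatterns, exists_mem_image, mul_mem_orthant_iff hc]

theorem orthantPatterns_eq_univ_of_isEmpty [IsEmpty ι] {A : Set (ι → ℝ)} (hA : A.Nonempty) :
    orthantPatterns A = univ :=
  eq_univ_of_forall fun _ => ⟨hA.some, hA.some_mem, fun j => isEmptyElim j⟩

end Orthant

section Cons

variable {n : ℕ} {A : Set (Fin (n + 1) → ℝ)} {τ : Fin n → Bool}

theorem cons_mem_orthant {b : Bool} {x : Fin (n + 1) → ℝ} :
    x ∈ orthant (Fin.cons b τ : Fin (n + 1) → Bool) ↔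
      x 0 ∈ (bif b then Ioi 0 else Iio 0 : Set ℝ) ∧ Fin.tail x ∈ orthant τ := by
  simp only [orthant, mem_univ_pi, Fin.forall_fin_succ, Fin.cons_zero, Fin.cons_succ]
  rfl

theorem ncard_eq_ncard_cons_true_add_ncard_cons_false (P : Set (Fin (n + 1) → Bool)) :
    P.ncard = {τ | Fin.cons true τ ∈ P}.ncard + {τ | Fin.cons false τ ∈ P}.ncard := by
  have hP : P = Fin.cons true '' {τ | Fin.cons true τ ∈ P} ∪
      Fin.cons false '' {τ | Fin.cons false τ ∈ P} := by
    ext σ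
    obtain ⟨b, τ, rfl⟩ : ∃ b τ, σ = Fin.cons b τ := ⟨σ 0, Fin.tail σ, (Fin.cons_self_tail σ).symm⟩
    cases b <;> simp [Fin.cons_injective2.eq_iff]
  have hdisj : Disjoint (Fin.cons true '' {τ | Fin.cons true τ ∈ P})
      (Fin.cons false '' {τ | Fin.cons false τ ∈ P}) := by
    simp [Set.disjoint_left, Fin.cons_injective2.eq_iff]
  nth_rw 1 [hP]
  rw [ncard_union_eq hdisj (toFinite _) (toFinite _),
    ncard_image_of_injective _ (Fin.cons_right_injective _),
    ncard_image_of_injective _ (Fin.cons_right_injective _)]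

theorem mem_orthantPatterns_tail_image {b : Bool} (h : Fin.cons b τ ∈ orthantPatterns A) :
    τ ∈ orthantPatterns (Fin.tail '' A) := by
  obtain ⟨x, hxA, hx⟩ := h
  exact ⟨_, mem_image_of_mem _ hxA, (cons_mem_orthant.1 hx).2⟩

theorem mem_orthantPatterns_tail_image_inter_zero (hA : Convex ℝ A)
    (hpos : Fin.cons true τ ∈ orthantPatterns A) (hneg : Fin.cons false τ ∈ orthantPatterns A) :
    τ ∈ orthantPatterns (Fin.tail '' (A ∩ {x | x 0 = 0})) := by
  obtain ⟨x, hxA, hx⟩ := hpos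
  obtain ⟨y, hyA, hy⟩ := hneg
  obtain ⟨hx0, hxτ⟩ := cons_mem_orthant.1 hx
  obtain ⟨hy0, hyτ⟩ := cons_mem_orthant.1 hy
  simp only [cond_true, cond_false, mem_Ioi, mem_Iio] at hx0 hy0
  obtain ⟨a, c, ha, hc, hac, hz⟩ :
      ∃ a c : ℝ, 0 ≤ a ∧ 0 ≤ c ∧ a + c = 1 ∧ a * x 0 + c * y 0 = 0 := by
    have hxy : x 0 - y 0 ≠ 0 := by linarith
    refine ⟨-y 0 / (x 0 - y 0), x 0 / (x 0 - y 0), div_nonneg ?_ ?_, div_nonneg ?_ ?_, ?_, ?_⟩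
    all_goals first | linarith | (field_simp; ring)
  exact ⟨Fin.tail (a • x + c • y), mem_image_of_mem _ ⟨hA hxA hyA ha hc hac, hz⟩,
    convex_orthant τ hxτ hyτ ha hc hac⟩

theorem cons_mem_orthantPatterns_of_mem_tail_image_inter_zero {v : Fin (n + 1) → ℝ}
    (hv : v 0 ≠ 0) (hA : ∀ x ∈ A, ∀ t : ℝ, x + t • v ∈ A)
    (hτ : τ ∈ orthantPatterns (Fin.tail '' (A ∩ {x | x 0 = 0}))) (b : Bool) :
    Fin.cons b τ ∈ orthantPatterns A := by
  obtain ⟨_, ⟨z, ⟨hzA, hz0⟩, rfl⟩, hzτ⟩ := hτ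
  -- a small step from `z` along `c • v` gives the first coordinate the sign `b`
  -- and keeps `Fin.tail z` in its open orthant
  set c : ℝ := bif b then v 0 else -v 0
  have hcont : Continuous fun ε : ℝ => Fin.tail (z + (c * ε) • v) := by
    unfold Fin.tail
    fun_prop
  have hnear : ∀ᶠ ε in 𝓝[>] 0, Fin.tail (z + (c * ε) • v) ∈ orthant τ :=
    nhdsWithin_le_nhds <| hcont.continuousAt.preimage_mem_nhds <| by
      simpa using (isOpen_orthant τ).mem_nhds hzτ
  obtain ⟨ε, hετ, hε⟩ := (hnear.and self_mem_nhdsWithin).exists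
  refine ⟨z + (c * ε) • v, hA z hzA _, cons_mem_orthant.2 ⟨?_, hετ⟩⟩
  have hstep : 0 < v 0 * ε * v 0 := by
    rw [mul_right_comm]
    exact mul_pos (mul_self_pos.2 hv) hε
  cases b
  · show z 0 + -v 0 * ε * v 0 < 0
    rw [show z 0 = 0 from hz0]
    linarith
  · show 0 < z 0 + v 0 * ε * v 0
    rw [show z 0 = 0 from hz0]
    linarith

theorem exists_cons_mem_orthantPatterns {v : Fin (n + 1) → ℝ}
    (hv : v 0 ≠ 0) (hA : ∀ x ∈ A, ∀ t : ℝ, x + t • v ∈ A)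
    (hτ : τ ∈ orthantPatterns (Fin.tail '' A)) :
    ∃ b, Fin.cons b τ ∈ orthantPatterns A := by
  obtain ⟨_, ⟨x, hxA, rfl⟩, hxτ⟩ := hτ
  rcases lt_trichotomy (x 0) 0 with hx0 | hx0 | hx0
  · exact ⟨false, x, hxA, cons_mem_orthant.2 ⟨hx0, hxτ⟩⟩
  · exact ⟨true, cons_mem_orthantPatterns_of_mem_tail_image_inter_zero hv hA
      ⟨_, mem_image_of_mem _ ⟨hxA, hx0⟩, hxτ⟩ true⟩
  · exact ⟨true, x, hxA, cons_mem_orthant.2 ⟨hx0, hxτ⟩⟩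

theorem ncard_orthantPatterns_eq_add (s : AffineSubspace ℝ (Fin (n + 1) → ℝ))
    {v : Fin (n + 1) → ℝ} (hvs : v ∈ s.direction) (hv : v 0 ≠ 0) :
    (orthantPatterns (s : Set (Fin (n + 1) → ℝ))).ncard =
      (orthantPatterns (Fin.tail '' (s : Set (Fin (n + 1) → ℝ)))).ncard +
        (orthantPatterns (Fin.tail '' ((s : Set (Fin (n + 1) → ℝ)) ∩ {x | x 0 = 0}))).ncard := by
  have hA (x) (hx : x ∈ s) (t : ℝ) : x + t • v ∈ s := by
    simpa [vadd_eq_add, add_comm] using s.vadd_mem_of_mem_direction (s.direction.smul_mem t hvs) hx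
  rw [ncard_eq_ncard_cons_true_add_ncard_cons_false,
    ← ncard_union_add_ncard_inter _ _ (toFinite _) (toFinite _)]
  congr 2 <;> ext τ
  · refine ⟨fun h => h.elim mem_orthantPatterns_tail_image mem_orthantPatterns_tail_image,
      fun h => ?_⟩
    obtain ⟨b, hb⟩ := exists_cons_mem_orthantPatterns hv hA h
    cases b
    exacts [Or.inr hb, Or.inl hb]
  · exact ⟨fun h => mem_orthantPatterns_tail_image_inter_zero s.convex h.1 h.2,
      fun h => ⟨cons_mem_orthantPatterns_of_mem_tail_image_inter_zero hv hA h true,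
        cons_mem_orthantPatterns_of_mem_tail_image_inter_zero hv hA h false⟩⟩

theorem ncard_orthantPatterns_le_of_forall_eq (hA : ∀ x ∈ A, ∀ y ∈ A, x 0 = y 0) :
    (orthantPatterns A).ncard ≤ (orthantPatterns (Fin.tail '' A)).ncard := by
  rw [ncard_eq_ncard_cons_true_add_ncard_cons_false,
    ← ncard_union_add_ncard_inter _ _ (toFinite _) (toFinite _)]
  have hempty : {τ | Fin.cons true τ ∈ orthantPatterns A} ∩
      {τ | Fin.cons false τ ∈ orthantPatterns A} = ∅ := by
    refine eq_empty_of_forall_notMem fun τ ⟨⟨x, hxA, hx⟩, ⟨y, hyA, hy⟩⟩ => ?_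
    have hx0 : 0 < x 0 := (cons_mem_orthant.1 hx).1
    have hy0 : y 0 < 0 := (cons_mem_orthant.1 hy).1
    linarith [hA x hxA y hyA]
  rw [hempty, ncard_empty, add_zero]
  exact ncard_le_ncard (union_subset (fun τ => mem_orthantPatterns_tail_image)
    (fun τ => mem_orthantPatterns_tail_image)) (toFinite _)

end Cons

theorem sum_range_choose_succ (n d : ℕ) :
    ∑ i ∈ Finset.range (d + 2), (n + 1).choose i =
      ∑ i ∈ Finset.range (d + 2), n.choose i + ∑ i ∈ Finset.range (d + 1), n.choose i := by
  rw [Finset.sum_range_succ' _ (d + 1), Finset.sum_range_succ' (fun i => n.choose i) (d + 1)]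
  simp only [Nat.choose_succ_succ', Finset.sum_add_distrib, Nat.choose_zero_right]
  ring

theorem AffineSubspace.finrank_direction_inf_lt {k V P : Type*} [DivisionRing k]
    [AddCommGroup V] [Module k V] [FiniteDimensional k V] [AddTorsor V P]
    {s t : AffineSubspace k P} {v : V} (hvs : v ∈ s.direction) (hvt : v ∉ t.direction) :
    Module.finrank k (s ⊓ t).direction < Module.finrank k s.direction :=
  calc Module.finrank k (s ⊓ t).direction
      ≤ Module.finrank k (s.direction ⊓ t.direction : Submodule k V) :=
        Submodule.finrank_mono (direction_inf s t)
    _ < Module.finrank k s.direction :=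
        Submodule.finrank_lt_finrank_of_lt (inf_lt_left.2 fun h => hvt (h hvs))

theorem ncard_orthantPatterns_le {n d : ℕ} (s : AffineSubspace ℝ (Fin n → ℝ))
    (hs : Module.finrank ℝ s.direction ≤ d) :
    (orthantPatterns (s : Set (Fin n → ℝ))).ncard ≤ ∑ i ∈ Finset.range (d + 1), n.choose i := by
  induction n generalizing d with
  | zero =>
    simpa [ncard_univ, Finset.sum_range_succ'] using
      ncard_le_ncard (subset_univ (orthantPatterns (s : Set (Fin 0 → ℝ))))
  | succ n ih =>
    let tailₗ : (Fin (n + 1) → ℝ) →ₗ[ℝ] Fin n → ℝ := LinearMap.funLeft ℝ ℝ Fin.succ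
    have htail (t : AffineSubspace ℝ (Fin (n + 1) → ℝ)) :
        Fin.tail '' (t : Set (Fin (n + 1) → ℝ)) = t.map tailₗ.toAffineMap :=
      (AffineSubspace.coe_map tailₗ.toAffineMap t).symm
    have hrank (t : AffineSubspace ℝ (Fin (n + 1) → ℝ)) :
        Module.finrank ℝ (t.map tailₗ.toAffineMap).direction ≤ Module.finrank ℝ t.direction := by
      rw [AffineSubspace.map_direction]
      exact Submodule.finrank_map_le _ _
    by_cases hv : ∃ v ∈ s.direction, v 0 ≠ 0
    · obtain ⟨v, hvs, hv0⟩ := hv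
      let K := (LinearMap.ker (LinearMap.proj 0 : (Fin (n + 1) → ℝ) →ₗ[ℝ] ℝ)).toAffineSubspace
      have hlt : Module.finrank ℝ (s ⊓ K).direction < d :=
        (AffineSubspace.finrank_direction_inf_lt hvs (by simpa [K] using hv0)).trans_le hs
      obtain ⟨d, rfl⟩ : ∃ d', d = d' + 1 := ⟨d - 1, by omega⟩
      have hsK : (s : Set (Fin (n + 1) → ℝ)) ∩ {x | x 0 = 0} = (s ⊓ K : AffineSubspace ℝ _) := rfl
      rw [ncard_orthantPatterns_eq_add s hvs hv0, hsK, htail, htail, sum_range_choose_succ]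
      exact add_le_add (ih _ ((hrank s).trans hs))
        (ih _ (Nat.le_of_lt_succ ((hrank _).trans_lt hlt)))
    · push Not at hv
      calc (orthantPatterns (s : Set (Fin (n + 1) → ℝ))).ncard
          ≤ (orthantPatterns (Fin.tail '' (s : Set (Fin (n + 1) → ℝ)))).ncard :=
            ncard_orthantPatterns_le_of_forall_eq fun x hx y hy =>
              sub_eq_zero.1 (hv _ (s.vsub_mem_direction hx hy))
        _ ≤ ∑ i ∈ Finset.range (d + 1), n.choose i := by
            rw [htail]
            exact ih _ ((hrank s).trans hs)
        _ ≤ ∑ i ∈ Finset.range (d + 1), (n + 1).choose i :=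
            Finset.sum_le_sum fun i _ => Nat.choose_le_choose i n.le_succ

section MonicValues

variable {ι : Type*}

theorem isMonicOfDegree_iff_sub_X_pow_mem_degreeLT {R : Type*} [Ring R] [Nontrivial R]
    {p : R[X]} {d : ℕ} : IsMonicOfDegree p d ↔ p - X ^ d ∈ degreeLT R d := by
  rw [isMonicOfDegree_iff, mem_degreeLT, degree_lt_iff_coeff_zero,
    natDegree_le_iff_coeff_eq_zero]
  simp only [coeff_sub, coeff_X_pow, sub_eq_zero]
  constructor
  · rintro ⟨hgt, hd⟩ m hm
    rcases hm.eq_or_lt with rfl | hm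
    · simp [hd]
    · simp [hgt m (by exact_mod_cast hm), hm.ne']
  · intro h
    exact ⟨fun m hm => by
      simpa [(show d < m by exact_mod_cast hm).ne'] using h m (by exact_mod_cast hm.le),
      by simpa using h d le_rfl⟩

noncomputable def monicValues (a : ι → ℝ) (d : ℕ) : AffineSubspace ℝ (ι → ℝ) :=
  AffineSubspace.mk' (fun j => a j ^ d) ((degreeLT ℝ d).map (LinearMap.pi fun j => leval (a j)))

theorem monicValues_nonempty (a : ι → ℝ) (d : ℕ) : (monicValues a d : Set (ι → ℝ)).Nonempty :=
  AffineSubspace.mk'_nonempty _ _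

theorem mem_monicValues {a : ι → ℝ} {d : ℕ} {x : ι → ℝ} :
    x ∈ monicValues a d ↔ ∃ p : ℝ[X], IsMonicOfDegree p d ∧ (fun j => p.eval (a j)) = x := by
  rw [monicValues, AffineSubspace.mem_mk', Submodule.mem_map]
  constructor
  · rintro ⟨q, hq, hqx⟩
    refine ⟨X ^ d + q, isMonicOfDegree_iff_sub_X_pow_mem_degreeLT.2 (by simpa using hq), ?_⟩
    funext j
    have := congrFun hqx j
    simp_all
  · rintro ⟨p, hp, rfl⟩
    refine ⟨_, isMonicOfDegree_iff_sub_X_pow_mem_degreeLT.1 hp, ?_⟩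
    funext j
    simp

theorem monicValues_zero (a : ι → ℝ) : (monicValues a 0 : Set (ι → ℝ)) = {1} := by
  ext x
  simp [mem_monicValues, eq_comm, Pi.one_def]

theorem one_mem_direction_monicValues (a : ι → ℝ) (d : ℕ) :
    (1 : ι → ℝ) ∈ (monicValues a (d + 1)).direction := by
  rw [monicValues, AffineSubspace.direction_mk']
  refine ⟨1, mem_degreeLT.2 ?_, by funext; simp⟩
  rw [degree_one]
  exact_mod_cast d.succ_pos

theorem finrank_direction_monicValues [Fintype ι] {a : ι → ℝ} (ha : Function.Injective a)
    {d : ℕ} (hd : d ≤ Fintype.card ι) : Module.finrank ℝ (monicValues a d).direction = d := by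
  let f : ℝ[X] →ₗ[ℝ] ι → ℝ := LinearMap.pi fun j => leval (a j)
  have hinj : Function.Injective (f.domRestrict (degreeLT ℝ d)) := by
    refine (injective_iff_map_eq_zero _).2 fun ⟨q, hq⟩ hfq => Subtype.ext ?_
    exact eq_zero_of_degree_lt_of_eval_index_eq_zero (s := Finset.univ) ha.injOn
      ((mem_degreeLT.1 hq).trans_le (by simpa using hd)) fun j _ => congrFun hfq j
  rw [monicValues, AffineSubspace.direction_mk', ← LinearMap.range_domRestrict,
    LinearMap.finrank_range_of_inj hinj, (degreeLTEquiv ℝ d).finrank_eq, Module.finrank_fin_fun]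

theorem tail_image_monicValues {n : ℕ} (a : Fin (n + 1) → ℝ) (d : ℕ) :
    Fin.tail '' (monicValues a d : Set (Fin (n + 1) → ℝ)) = monicValues (Fin.tail a) d := by
  ext y
  simp only [mem_image, SetLike.mem_coe, mem_monicValues]
  constructor
  · rintro ⟨_, ⟨p, hp, rfl⟩, rfl⟩
    exact ⟨p, hp, rfl⟩
  · rintro ⟨p, hp, rfl⟩
    exact ⟨_, ⟨p, hp, rfl⟩, rfl⟩

theorem tail_image_monicValues_inter_zero {n : ℕ} (a : Fin (n + 1) → ℝ) (d : ℕ) :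
    Fin.tail '' ((monicValues a (d + 1) : Set (Fin (n + 1) → ℝ)) ∩ {x | x 0 = 0}) =
      ((fun j => a j.succ - a 0) * ·) '' monicValues (Fin.tail a) d := by
  ext y
  simp only [mem_image, mem_inter_iff, SetLike.mem_coe, mem_monicValues]
  constructor
  · rintro ⟨_, ⟨⟨p, hp, rfl⟩, hp0⟩, rfl⟩
    have hfac : (X - C (a 0)) * (p /ₘ (X - C (a 0))) = p := mul_divByMonic_eq_iff_isRoot.2 hp0
    refine ⟨_, ⟨p /ₘ (X - C (a 0)),
      (isMonicOfDegree_X_sub_one (a 0)).of_mul_left (by rwa [hfac, add_comm]), rfl⟩, ?_⟩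
    funext j
    conv_rhs => rw [← hfac]
    simp [Fin.tail]
  · rintro ⟨_, ⟨q, hq, rfl⟩, rfl⟩
    refine ⟨_, ⟨⟨(X - C (a 0)) * q,
      by simpa [add_comm] using (isMonicOfDegree_X_sub_one (a 0)).mul hq, rfl⟩, by simp⟩, ?_⟩
    funext j
    simp [Fin.tail]

theorem ncard_orthantPatterns_monicValues {n : ℕ} {a : Fin n → ℝ} (ha : StrictMono a) (d : ℕ) :
    (orthantPatterns (monicValues a d : Set (Fin n → ℝ))).ncard =
      ∑ i ∈ Finset.range (d + 1), n.choose i := by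
  induction n generalizing d with
  | zero =>
    rw [orthantPatterns_eq_univ_of_isEmpty (monicValues_nonempty a d)]
    simp [ncard_univ, Finset.sum_range_succ']
  | succ n ih =>
    cases d with
    | zero =>
      have : orthantPatterns (monicValues a 0 : Set (Fin (n + 1) → ℝ)) = {fun _ => true} := by
        ext σ
        simp [orthantPatterns, monicValues_zero, one_mem_orthant_iff]
      simp [this]
    | succ d =>
      have ha' : StrictMono (Fin.tail a) := ha.comp (Fin.strictMono_succ)
      rw [ncard_orthantPatterns_eq_add _ (one_mem_direction_monicValues a d) one_ne_zero,
        tail_image_monicValues, tail_image_monicValues_inter_zero,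
        orthantPatterns_image_mul (fun j => sub_pos.2 (ha j.succ_pos)), ih ha', ih ha',
        sum_range_choose_succ]

end MonicValues

/-- A `d`-dimensional affine subspace of `ℝ^n` intersects at most `∑_{i=0}^d C(n,i)` open
orthants, and this bound is attained (by a generic affine subspace). -/
theorem affine_subspace_orthant_count
    (n d : ℕ) (hdn : d ≤ n) :
    (∀ s : AffineSubspace ℝ (Fin n → ℝ), (s : Set (Fin n → ℝ)).Nonempty →
      Module.finrank ℝ s.direction = d →
      {σ : Fin n → Bool | ∃ x ∈ s, ∀ j, (σ j = true → 0 < x j) ∧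
        (σ j = false → x j < 0)}.ncard ≤ ∑ i ∈ Finset.range (d + 1), n.choose i) ∧
    (∃ s : AffineSubspace ℝ (Fin n → ℝ), (s : Set (Fin n → ℝ)).Nonempty ∧
      Module.finrank ℝ s.direction = d ∧
      {σ : Fin n → Bool | ∃ x ∈ s, ∀ j, (σ j = true → 0 < x j) ∧
        (σ j = false → x j < 0)}.ncard = ∑ i ∈ Finset.range (d + 1), n.choose i) := by
  simp only [← mem_orthant]
  have ha : StrictMono fun j : Fin n => (j : ℝ) := Nat.strictMono_cast.comp Fin.val_strictMono
  exact ⟨fun s _ hs => ncard_orthantPatterns_le s hs.le,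
    monicValues _ d, monicValues_nonempty _ d,
    finrank_direction_monicValues ha.injective (by simpa using hdn),
    ncard_orthantPatterns_monicValues ha d⟩
end

section
/- There is no arrangement of at most 5 hyperplanes in ℝ^4 that slices each edge of the 4-dimensional unit cube at least twice, where a hyperplane slices an edge if it meets the relative interior of the edge and contains no vertex of the cube. -/
/-!
Reflect the cube in the coordinates where the normal vector of a hyperplane is negative: the side
of the hyperplane on which a vertex lies becomes a monotone Boolean function, and every sliced
edge is an edge across which this function changes value. Along each of the `n!` maximal chains
of the cube (one for each order of switching the coordinates on) a monotone function changes value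
at most once, while for `n ≥ 4` every edge lies on at least two maximal chains. So a hyperplane
slices at most `n!/2` edges (O'Neil's bound), i.e. `12` edges of the 4-cube, and five hyperplanes
slice at most `60 < 2 · 32` edges counted with multiplicity.
-/

/-- The hyperplane `{x | ∑ j, a j * x j = b}` slices the edge of the unit cube between
adjacent vertices `u, w`: it meets the relative interior of the edge and contains no
vertex of the cube. -/
def SlicesEdge (n : ℕ) (a : Fin n → ℝ) (b : ℝ) (u w : Fin n → Bool) : Prop :=
  (∀ z : Fin n → Bool, ∑ j, a j * (if z j then (1 : ℝ) else 0) ≠ b) ∧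
  ∃ t : ℝ, t ∈ Set.Ioo (0 : ℝ) 1 ∧
    ∑ j, a j * ((1 - t) * (if u j then (1 : ℝ) else 0) + t * (if w j then (1 : ℝ) else 0)) = b

open Finset Equiv
open scoped Nat

namespace HypercubeCut

variable {n : ℕ}

def vertexValue (a : Fin n → ℝ) (z : Fin n → Bool) : ℝ :=
  ∑ j, a j * if z j then (1 : ℝ) else 0

noncomputable def threshold (a : Fin n → ℝ) (b : ℝ) (z : Fin n → Bool) : Bool :=
  decide (b < vertexValue a z)

def flipCoord (z : Fin n → Bool) (j : Fin n) : Fin n → Bool :=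
  Function.update z j (!z j)

-- An edge is encoded by one endpoint and its direction, so every edge of the cube occurs twice.
def edgeBoundary (s : (Fin n → Bool) → Bool) : Finset ((Fin n → Bool) × Fin n) :=
  {e | s e.1 ≠ s (flipCoord e.1 e.2)}

-- The maximal chain of the cube given by `σ` switches on the coordinates `σ 0, σ 1, …` in turn.
def chainVertex (σ : Perm (Fin n)) (k : ℕ) : Fin n → Bool :=
  fun i => decide ((σ.symm i : ℕ) < k)

@[simp]
lemma flipCoord_apply_self (z : Fin n → Bool) (j : Fin n) : flipCoord z j j = !z j := by
  simp [flipCoord]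

@[simp]
lemma flipCoord_flipCoord (z : Fin n → Bool) (j : Fin n) : flipCoord (flipCoord z j) j = z := by
  ext i; by_cases h : i = j <;> simp [flipCoord, h]

lemma hammingDist_flipCoord (z : Fin n → Bool) (j : Fin n) : hammingDist z (flipCoord z j) = 1 := by
  rw [hammingDist, card_eq_one]
  exact ⟨j, by ext i; by_cases h : i = j <;> simp [flipCoord, Function.update_apply, h]⟩

lemma threshold_ne_of_slicesEdge {a : Fin n → ℝ} {b : ℝ} {u w : Fin n → Bool}
    (h : SlicesEdge n a b u w) : threshold a b u ≠ threshold a b w := by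
  obtain ⟨hvert, t, ⟨ht0, ht1⟩, ht⟩ := h
  replace hvert : ∀ z, vertexValue a z ≠ b := hvert
  have hmix : (1 - t) * vertexValue a u + t * vertexValue a w = b := by
    rw [← ht, vertexValue, vertexValue, mul_sum, mul_sum, ← sum_add_distrib]
    exact sum_congr rfl fun j _ => by ring
  intro hsame
  simp only [threshold, decide_eq_decide] at hsame
  rcases (hvert u).lt_or_gt with hu | hu
  · have hw : vertexValue a w < b := (not_lt.mp (hsame.not.mp hu.not_gt)).lt_of_ne (hvert w)
    nlinarith
  · nlinarith [hsame.mp hu]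

lemma monotone_vertexValue_xor (a : Fin n → ℝ) :
    Monotone fun z : Fin n → Bool => vertexValue a fun i => xor (z i) (decide (a i < 0)) := by
  intro z z' hz
  refine sum_le_sum fun i _ => ?_
  have hzi := Bool.le_iff_imp.mp (hz i)
  rcases lt_or_ge (a i) 0 with ha | ha
  · cases h : z i <;> cases h' : z' i <;> simp_all [ha.le]
  · cases h : z i <;> cases h' : z' i <;> simp_all [not_lt.mpr ha]

lemma monotone_threshold_xor (a : Fin n → ℝ) (b : ℝ) :
    Monotone fun z : Fin n → Bool => threshold a b fun i => xor (z i) (decide (a i < 0)) :=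
  fun _ _ hz => Bool.le_iff_imp.mpr fun h => by
    simp only [threshold, decide_eq_true_eq] at h ⊢
    exact h.trans_le (monotone_vertexValue_xor a hz)

lemma card_edgeBoundary_comp_xor (s : (Fin n → Bool) → Bool) (c : Fin n → Bool) :
    #(edgeBoundary fun z => s fun i => xor (z i) (c i)) = #(edgeBoundary s) := by
  have hflip : ∀ (z : Fin n → Bool) j,
      (fun i => xor (flipCoord z j i) (c i)) = flipCoord (fun i => xor (z i) (c i)) j := by
    intro z j; ext i; by_cases h : i = j <;> simp [flipCoord, h]
  refine card_nbij' (fun e => (fun i => xor (e.1 i) (c i), e.2))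
    (fun e => (fun i => xor (e.1 i) (c i), e.2)) ?_ ?_ ?_ ?_ <;>
    intro e <;> simp [edgeBoundary, hflip]

@[simp]
lemma flipCoord_chainVertex (σ : Perm (Fin n)) (k : Fin n) :
    flipCoord (chainVertex σ k) (σ k) = chainVertex σ (k + 1) := by
  ext i
  by_cases h : i = σ k
  · subst h; simp [chainVertex]
  · have : (σ.symm i : ℕ) ≠ k := fun h' => h (by rw [← Fin.ext h', apply_symm_apply])
    simp [flipCoord, chainVertex, h]
    omega

lemma chainVertex_mul_swap (σ : Perm (Fin n)) {p q : Fin n} {m : ℕ}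
    (h : (p : ℕ) < m ↔ (q : ℕ) < m) : chainVertex (σ * swap p q) m = chainVertex σ m := by
  ext i
  suffices ((swap p q (σ.symm i) : ℕ) < m ↔ (σ.symm i : ℕ) < m) by
    simp only [chainVertex, Perm.mul_def, symm_trans_apply, symm_swap]
    exact decide_eq_decide.mpr this
  rcases eq_or_ne (σ.symm i) p with hp | hp
  · rw [hp, swap_apply_left, h]
  rcases eq_or_ne (σ.symm i) q with hq | hq
  · rw [hq, swap_apply_right, h]
  · rw [swap_apply_of_ne_of_ne hp hq]

lemma exists_chainVertex_eq {z : Fin n → Bool} {j : Fin n} (hj : z j = false) :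
    ∃ σ : Perm (Fin n), ∃ k : Fin n, chainVertex σ k = z ∧ σ k = j := by
  set m := #{i | z i = true}
  have hm : m < n := by
    simpa using card_lt_card (filter_ssubset.mpr ⟨j, mem_univ j, by simp [hj]⟩)
  obtain ⟨σ₀, hσ₀⟩ := Perm.exists_map_finset_eq {k : Fin n | (k : ℕ) < m} {i | z i = true}
    (by rw [Fin.card_filter_val_lt, min_eq_right hm.le])
  have hside : ∀ i, (σ₀.symm i : ℕ) < m ↔ z i = true := fun i => by
    have := congrArg (i ∈ ·) hσ₀
    simpa [mem_map_equiv] using this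
  let k : Fin n := ⟨m, hm⟩
  have hjk : ¬ (σ₀.symm j : ℕ) < m := by simp [hside, hj]
  refine ⟨σ₀ * swap (σ₀.symm j) k, k, ?_, by simp⟩
  rw [chainVertex_mul_swap _ (iff_of_false hjk (lt_irrefl m))]
  ext i
  simp [chainVertex, hside]

lemma two_le_card_chains_through (hn : 4 ≤ n) {z : Fin n → Bool} {j : Fin n} (hj : z j = false) :
    2 ≤ #{σ : Perm (Fin n) | ∃ k : Fin n, (chainVertex σ k, σ k) = (z, j)} := by
  obtain ⟨σ, k, hz, hk⟩ := exists_chainVertex_eq hj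
  -- the `n - 1 ≥ 3` coordinates other than `σ k` include two on the same side of step `k`
  obtain ⟨p, q, hpq, hpk, hqk, hside⟩ : ∃ p q : Fin n,
      p ≠ q ∧ p ≠ k ∧ q ≠ k ∧ ((p : ℕ) < k ↔ (q : ℕ) < k) := by
    by_cases hk2 : 2 ≤ (k : ℕ)
    · exact ⟨⟨0, by omega⟩, ⟨1, by omega⟩, by simp [Fin.ext_iff], by simp [Fin.ext_iff]; omega,
        by simp [Fin.ext_iff]; omega, by simp; omega⟩
    · exact ⟨⟨n - 1, by omega⟩, ⟨n - 2, by omega⟩, by simp [Fin.ext_iff]; omega,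
        by simp [Fin.ext_iff]; omega, by simp [Fin.ext_iff]; omega, by simp; omega⟩
  refine one_lt_card.mpr ⟨σ, mem_filter.mpr ⟨mem_univ _, k, by rw [hz, hk]⟩, σ * swap p q,
    mem_filter.mpr ⟨mem_univ _, k, ?_⟩, fun h => hpq (by simpa using congrArg (· p) h)⟩
  rw [chainVertex_mul_swap σ hside, Perm.mul_apply, swap_apply_of_ne_of_ne hpk.symm hqk.symm,
    hz, hk]

lemma eq_of_monotone_of_ne_succ {g : ℕ → Bool} (hg : Monotone g) {k l : ℕ}
    (hk : g k ≠ g (k + 1)) (hl : g l ≠ g (l + 1)) : k = l := by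
  have jump : ∀ {i}, g i ≠ g (i + 1) → g i = false ∧ g (i + 1) = true := fun {i} hi => by
    have := Bool.le_iff_imp.mp (hg i.le_succ)
    cases h : g i <;> cases h' : g (i + 1) <;> simp_all
  by_contra hkl
  wlog h : k < l generalizing k l
  · exact this hl hk (Ne.symm hkl) (by omega)
  have := hg (Nat.succ_le_of_lt h)
  rw [(jump hk).2, (jump hl).1] at this
  exact absurd this (by decide)

lemma monotone_chainVertex (σ : Perm (Fin n)) : Monotone (chainVertex σ) :=
  fun _ _ hkl _ => Bool.le_iff_imp.mpr fun h => by
    simp only [chainVertex, decide_eq_true_eq] at h ⊢; omega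

lemma card_chainSteps_mem_edgeBoundary_le_one {s : (Fin n → Bool) → Bool} (hs : Monotone s)
    (σ : Perm (Fin n)) : #{k : Fin n | (chainVertex σ k, σ k) ∈ edgeBoundary s} ≤ 1 := by
  refine card_le_one.mpr fun k hk l hl => Fin.ext ?_
  simp only [edgeBoundary, mem_filter, mem_univ, true_and, flipCoord_chainVertex] at hk hl
  exact eq_of_monotone_of_ne_succ (hs.comp (monotone_chainVertex σ)) hk hl

lemma card_lowerEdgeBoundary_mul_two_le_of_monotone {s : (Fin n → Bool) → Bool} (hs : Monotone s)
    (hn : 4 ≤ n) : #{e ∈ edgeBoundary s | e.1 e.2 = false} * 2 ≤ n ! := by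
  have := card_mul_le_card_mul (s := {e ∈ edgeBoundary s | e.1 e.2 = false})
    (t := (univ : Finset (Perm (Fin n)))) (m := 2) (n := 1)
    (r := fun e σ => ∃ k : Fin n, (chainVertex σ k, σ k) = e)
    (fun e he => two_le_card_chains_through hn (mem_filter.mp he).2)
    (fun σ _ => by
      refine (card_le_card fun e he => ?_).trans
        ((card_image_le (f := fun k : Fin n => (chainVertex σ k, σ k))).trans
          (card_chainSteps_mem_edgeBoundary_le_one hs σ))
      obtain ⟨he, k, rfl⟩ := mem_filter.mp he
      exact mem_image.mpr ⟨k, by simpa using (mem_filter.mp he).1, rfl⟩)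
  simpa [Fintype.card_perm] using this

lemma flipCoord_mem_edgeBoundary {s : (Fin n → Bool) → Bool} {e : (Fin n → Bool) × Fin n} :
    (flipCoord e.1 e.2, e.2) ∈ edgeBoundary s ↔ e ∈ edgeBoundary s := by
  simp only [edgeBoundary, mem_filter, mem_univ, true_and, flipCoord_flipCoord, ne_comm]

lemma card_edgeBoundary_eq_two_mul (s : (Fin n → Bool) → Bool) :
    #(edgeBoundary s) = 2 * #{e ∈ edgeBoundary s | e.1 e.2 = false} := by
  have hflip : #{e ∈ edgeBoundary s | ¬e.1 e.2 = false} = #{e ∈ edgeBoundary s | e.1 e.2 = false} :=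
    card_nbij' (fun e => (flipCoord e.1 e.2, e.2)) (fun e => (flipCoord e.1 e.2, e.2))
      (fun e he => by simpa [flipCoord_mem_edgeBoundary] using he)
      (fun e he => by simpa [flipCoord_mem_edgeBoundary] using he)
      (fun e _ => by simp) (fun e _ => by simp)
  rw [← card_filter_add_card_filter_not (s := edgeBoundary s) (fun e => e.1 e.2 = false), hflip,
    two_mul]

lemma card_edgeBoundary_le_of_monotone {s : (Fin n → Bool) → Bool} (hs : Monotone s)
    (hn : 4 ≤ n) : #(edgeBoundary s) ≤ n ! := by
  rw [card_edgeBoundary_eq_two_mul, mul_comm]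
  exact card_lowerEdgeBoundary_mul_two_le_of_monotone hs hn

lemma card_edgeBoundary_threshold_le (a : Fin n → ℝ) (b : ℝ) (hn : 4 ≤ n) :
    #(edgeBoundary (threshold a b)) ≤ n ! :=
  card_edgeBoundary_comp_xor (threshold a b) (fun i => decide (a i < 0)) ▸
    card_edgeBoundary_le_of_monotone (monotone_threshold_xor a b) hn

lemma card_le_of_forall_slicesEdge {a : Fin n → ℝ} {b : ℝ} (hn : 4 ≤ n)
    {E : Finset ((Fin n → Bool) × Fin n)} (hE : ∀ e ∈ E, SlicesEdge n a b e.1 (flipCoord e.1 e.2)) :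
    #E ≤ n ! :=
  (card_le_card fun e he => mem_filter.mpr ⟨mem_univ e, threshold_ne_of_slicesEdge (hE e he)⟩).trans
    (card_edgeBoundary_threshold_le a b hn)

end HypercubeCut

open HypercubeCut in
/-- There is no arrangement of at most `5` hyperplanes in `ℝ^4` that slices each edge of
the `4`-dimensional unit cube at least twice. -/
theorem no_five_hyperplanes_double_cover_4cube :
    ¬ ∃ (k : ℕ) (_ : k ≤ 5) (a : Fin k → Fin 4 → ℝ) (b : Fin k → ℝ),
      (∀ i, a i ≠ 0) ∧
      ∀ u w : Fin 4 → Bool, hammingDist u w = 1 →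
        2 ≤ {i : Fin k | SlicesEdge 4 (a i) (b i) u w}.ncard := by
  classical
  rintro ⟨k, hk, a, b, -, hcover⟩
  have hcount := card_mul_le_card_mul (s := (univ : Finset ((Fin 4 → Bool) × Fin 4)))
    (t := (univ : Finset (Fin k))) (m := 2) (n := 4 !)
    (r := fun e i => SlicesEdge 4 (a i) (b i) e.1 (flipCoord e.1 e.2))
    (fun e _ => by
      rw [← Set.ncard_coe_finset, bipartiteAbove, coe_filter_univ]
      exact hcover e.1 _ (hammingDist_flipCoord e.1 e.2))
    (fun i _ => card_le_of_forall_slicesEdge le_rfl fun e he => (mem_filter.mp he).2)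
  simp only [card_univ, Fintype.card_prod, Fintype.card_pi, Fintype.card_bool, prod_const,
    Fintype.card_fin, Nat.factorial] at hcount
  omega
end

section
/- Every central hyperplane in ℝ^3 (through the center of the cube [0,1]^3) that contains no vertex of the 3-cube slices at most 6 edges of the 3-cube, and any hyperplane containing no vertex slices at most 6 edges; consequently any arrangement of 4 hyperplanes slicing every edge of the 3-cube an even nonzero number of times must slice each of the 12 edges exactly twice. -/
/-!
A hyperplane `∑ aⱼ xⱼ = b` containing no vertex colours each vertex `z` of the cube by whether
`f z < b`, where `f z = ∑ aⱼ zⱼ`, and it slices exactly the bichromatic edges. As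
`f v + f (v + e_p + e_q) = f (v + e_p) + f (v + e_q)`, no square face of the cube is coloured
alternately, so each of the six squares contains at most two bichromatic edges; every edge lies
in two squares, hence at most six edges are sliced. Four hyperplanes therefore have at most `24`
slicings in total, while each of the `12` edges is sliced at least twice: every edge is sliced
exactly twice.
-/

open Finset Function

section Cube

variable {n : ℕ}

noncomputable def vertexValue (a : Fin n → ℝ) (z : Fin n → Bool) : ℝ :=
  ∑ j, a j * (if z j then 1 else 0)

theorem vertexValue_update_true (a : Fin n → ℝ) {u : Fin n → Bool} {j : Fin n}
    (hj : u j = false) : vertexValue a (update u j true) = vertexValue a u + a j := by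
  simp only [vertexValue]
  rw [← add_sum_erase _ _ (mem_univ j), ← add_sum_erase _ _ (mem_univ j),
    sum_congr rfl fun k hk => by rw [update_of_ne (ne_of_mem_erase hk)]]
  simp [hj, add_comm]

theorem sum_mul_convexComb_vertices (a : Fin n → ℝ) (u w : Fin n → Bool) (t : ℝ) :
    ∑ j, a j * ((1 - t) * (if u j then (1 : ℝ) else 0) + t * (if w j then (1 : ℝ) else 0)) =
      (1 - t) * vertexValue a u + t * vertexValue a w := by
  simp only [vertexValue, mul_sum, ← sum_add_distrib]
  exact sum_congr rfl fun j _ => by ring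

theorem lt_iff_lt_of_convexComb_eq {A B b t : ℝ} (ht : t ∈ Set.Ioo 0 1)
    (h : (1 - t) * A + t * B = b) : A < b ↔ b < B := by
  obtain ⟨ht₀, ht₁⟩ := ht
  constructor <;> intro <;> nlinarith

theorem SlicesEdge.lt_iff_not_lt {a : Fin n → ℝ} {b : ℝ} {u w : Fin n → Bool}
    (h : SlicesEdge n a b u w) : vertexValue a u < b ↔ ¬ vertexValue a w < b := by
  obtain ⟨hvert, t, ht, hb⟩ := h
  rw [sum_mul_convexComb_vertices] at hb
  rw [lt_iff_lt_of_convexComb_eq ht hb, not_lt]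
  exact ⟨le_of_lt, fun h => lt_of_le_of_ne h (hvert w).symm⟩

def cubeEdges (n : ℕ) : Finset ((Fin n → Bool) × Fin n) := {e | e.1 e.2 = false}

def cutEdges (s : (Fin n → Bool) → Bool) : Finset ((Fin n → Bool) × Fin n) :=
  {e ∈ cubeEdges n | s e.1 ≠ s (update e.1 e.2 true)}

theorem mem_cutEdges {s : (Fin n → Bool) → Bool} {e : (Fin n → Bool) × Fin n} :
    e ∈ cutEdges s ↔ e.1 e.2 = false ∧ s e.1 ≠ s (update e.1 e.2 true) := by
  simp [cutEdges, cubeEdges]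

def NoAlternatingSquare (s : (Fin n → Bool) → Bool) : Prop :=
  ∀ v p q, p ≠ q → v p = false → v q = false →
    s (update v p true) ≠ s v → s (update v q true) ≠ s v →
      s (update (update v p true) q true) ≠ s v

theorem noAlternatingSquare_threshold (a : Fin n → ℝ) (b : ℝ) :
    NoAlternatingSquare fun z => decide (vertexValue a z < b) := by
  intro v p q hpq hvp hvq hp hq
  have hvpq : update v p true q = false := by rwa [update_of_ne hpq.symm]
  simp only [ne_eq, decide_eq_decide, vertexValue_update_true a hvp, vertexValue_update_true a hvq,
    vertexValue_update_true a hvpq] at hp hq ⊢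
  by_cases hv : vertexValue a v < b
  · simp only [hv, iff_true, not_lt] at hp hq ⊢
    linarith
  · simp only [hv, iff_false, not_not] at hp hq ⊢
    linarith [not_lt.mp hv]

/-- Squares are listed with an ordered pair of directions, so each square occurs twice. -/
def cubeSquares (n : ℕ) : Finset ((Fin n → Bool) × Fin n × Fin n) :=
  {σ | σ.2.1 ≠ σ.2.2 ∧ σ.1 σ.2.1 = false ∧ σ.1 σ.2.2 = false}

def squareEdge (v : Fin n → Bool) (p q : Fin n) : Bool × Bool → (Fin n → Bool) × Fin n
  | (false, c) => (update v q c, p)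
  | (true, c) => (update v p c, q)

theorem card_cutEdges_squareEdge_le_two {s : (Fin n → Bool) → Bool} (hs : NoAlternatingSquare s)
    {v : Fin n → Bool} {p q : Fin n} (hpq : p ≠ q) (hvp : v p = false) (hvq : v q = false) :
    #{i | squareEdge v p q i ∈ cutEdges s} ≤ 2 := by
  have hv₁ : update v p false = v := hvp ▸ update_eq_self p v
  have hv₂ : update v q false = v := hvq ▸ update_eq_self q v
  rw [card_filter, Fintype.sum_prod_type]
  simp only [Fintype.sum_bool, squareEdge, hv₁, hv₂, mem_cutEdges, update_of_ne hpq,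
    update_of_ne hpq.symm, hvp, hvq, update_comm hpq.symm, true_and]
  have halt := hs v p q hpq hvp hvq
  generalize s v = c₀ at *
  generalize s (update v p true) = c₁ at *
  generalize s (update v q true) = c₂ at *
  generalize s (update (update v p true) q true) = c₃ at *
  revert c₀ c₁ c₂ c₃
  decide

end Cube

theorem card_cubeEdges_three : #(cubeEdges 3) = 12 := by decide

theorem card_cubeSquares_three : #(cubeSquares 3) = 12 := by decide

theorem four_le_card_cubeSquares_containing :
    ∀ e ∈ cubeEdges 3, 4 ≤ #{σ ∈ cubeSquares 3 | ∃ i, squareEdge σ.1 σ.2.1 σ.2.2 i = e} := by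
  decide

theorem card_cutEdges_le_six {s : (Fin 3 → Bool) → Bool} (hs : NoAlternatingSquare s) :
    #(cutEdges s) ≤ 6 := by
  let r : (Fin 3 → Bool) × Fin 3 → (Fin 3 → Bool) × Fin 3 × Fin 3 → Prop :=
    fun e σ => ∃ i, squareEdge σ.1 σ.2.1 σ.2.2 i = e
  have hedge (e) (he : e ∈ cutEdges s) : 4 ≤ #((cubeSquares 3).bipartiteAbove r e) :=
    four_le_card_cubeSquares_containing e (filter_subset _ _ he)
  have hsquare (σ) (hσ : σ ∈ cubeSquares 3) : #((cutEdges s).bipartiteBelow r σ) ≤ 2 := by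
    obtain ⟨v, p, q⟩ := σ
    obtain ⟨hpq, hvp, hvq⟩ := (mem_filter.mp hσ).2
    calc #((cutEdges s).bipartiteBelow r (v, p, q))
        ≤ #(image (squareEdge v p q) {i | squareEdge v p q i ∈ cutEdges s}) := by
          refine card_le_card fun e he => ?_
          obtain ⟨hcut, i, rfl⟩ := mem_filter.mp he
          exact mem_image_of_mem _ (mem_filter.mpr ⟨mem_univ _, hcut⟩)
      _ ≤ #{i | squareEdge v p q i ∈ cutEdges s} := card_image_le
      _ ≤ 2 := card_cutEdges_squareEdge_le_two hs hpq hvp hvq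
  have := card_mul_le_card_mul r hedge hsquare
  rw [card_cubeSquares_three] at this
  omega

theorem ncard_slicedEdges_le_six (a : Fin 3 → ℝ) (b : ℝ) :
    {e : (Fin 3 → Bool) × Fin 3 | e.1 e.2 = false ∧
      SlicesEdge 3 a b e.1 (update e.1 e.2 true)}.ncard ≤ 6 := by
  have hsub : {e : (Fin 3 → Bool) × Fin 3 | e.1 e.2 = false ∧
      SlicesEdge 3 a b e.1 (update e.1 e.2 true)} ⊆
        cutEdges fun z => decide (vertexValue a z < b) := by
    rintro e ⟨he, hslice⟩
    refine mem_cutEdges.mpr ⟨he, ?_⟩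
    simp only [ne_eq, decide_eq_decide, hslice.lt_iff_not_lt]
    tauto
  calc _ ≤ #(cutEdges fun z => decide (vertexValue a z < b)) :=
        (Set.ncard_le_ncard hsub (finite_toSet _)).trans_eq (Set.ncard_coe_finset _)
    _ ≤ 6 := card_cutEdges_le_six (noAlternatingSquare_threshold a b)

theorem card_filter_eq_of_card_mul_le {α ι : Type*} {E : Finset α} {H : Finset ι}
    (r : α → ι → Prop) [∀ e i, Decidable (r e i)] {k m : ℕ}
    (hH : ∀ i ∈ H, #{e ∈ E | r e i} ≤ m) (hm : #H * m ≤ k * #E)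
    (hE : ∀ e ∈ E, k ≤ #{i ∈ H | r e i}) : ∀ e ∈ E, #{i ∈ H | r e i} = k := by
  have hsum : ∑ e ∈ E, #{i ∈ H | r e i} ≤ ∑ _e ∈ E, k :=
    calc ∑ e ∈ E, #{i ∈ H | r e i} = ∑ i ∈ H, #{e ∈ E | r e i} :=
          sum_card_bipartiteAbove_eq_sum_card_bipartiteBelow r
      _ ≤ #H * m := sum_le_card_nsmul _ _ _ hH
      _ ≤ ∑ _e ∈ E, k := by simpa [mul_comm] using hm
  intro e he
  exact ((sum_eq_sum_iff_of_le hE).1 (le_antisymm (sum_le_sum hE) hsum) e he).symm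

/-- Edges are encoded as pairs `(u, j)` with `u j = false`, the edge joining `u` and
`Function.update u j true`. -/
theorem cube3_cut_bound_and_double_slicing :
    (∀ (a : Fin 3 → ℝ) (b : ℝ), a ≠ 0 → (∑ j, a j * (1 / 2 : ℝ)) = b →
      {e : (Fin 3 → Bool) × Fin 3 | e.1 e.2 = false ∧
        SlicesEdge 3 a b e.1 (Function.update e.1 e.2 true)}.ncard ≤ 6) ∧
    (∀ (a : Fin 3 → ℝ) (b : ℝ), a ≠ 0 →
      {e : (Fin 3 → Bool) × Fin 3 | e.1 e.2 = false ∧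
        SlicesEdge 3 a b e.1 (Function.update e.1 e.2 true)}.ncard ≤ 6) ∧
    (∀ (a : Fin 4 → Fin 3 → ℝ) (b : Fin 4 → ℝ), (∀ i, a i ≠ 0) →
      (∀ (u : Fin 3 → Bool) (j : Fin 3), u j = false →
        Even {i : Fin 4 | SlicesEdge 3 (a i) (b i) u (Function.update u j true)}.ncard ∧
        {i : Fin 4 | SlicesEdge 3 (a i) (b i) u (Function.update u j true)}.ncard ≠ 0) →
      ∀ (u : Fin 3 → Bool) (j : Fin 3), u j = false →
        {i : Fin 4 | SlicesEdge 3 (a i) (b i) u (Function.update u j true)}.ncard = 2) := by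
  refine ⟨fun a b _ _ => ncard_slicedEdges_le_six a b, fun a b _ => ncard_slicedEdges_le_six a b, ?_⟩
  intro a b _ hparity u j hj
  classical
  let slices (e : (Fin 3 → Bool) × Fin 3) (i : Fin 4) : Prop :=
    SlicesEdge 3 (a i) (b i) e.1 (update e.1 e.2 true)
  have hncard (e) : {i | slices e i}.ncard = #{i | slices e i} := by
    rw [← Set.ncard_coe_finset, coe_filter_univ]
  have hplane (i) (_ : i ∈ univ) : #{e ∈ cubeEdges 3 | slices e i} ≤ 6 := by
    simpa [← Set.ncard_coe_finset, cubeEdges, slices] using ncard_slicedEdges_le_six (a i) (b i)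
  have hedge (e) (he : e ∈ cubeEdges 3) : 2 ≤ #{i | slices e i} := by
    obtain ⟨⟨k, hk⟩, hne⟩ := hparity e.1 e.2 (mem_filter.mp he).2
    rw [← hncard e]
    dsimp only [slices]
    omega
  exact (hncard (u, j)).trans <| card_filter_eq_of_card_mul_le slices hplane
    (by simp [card_cubeEdges_three]) hedge (u, j) (mem_filter.mpr ⟨mem_univ _, hj⟩)
end

section
/- There exist W ∈ ℝ^{3×4} and B ∈ ℝ^4 such that the 3-zonoset {h^⊤W + B^⊤ : h ∈ {0,1}^3} ⊂ ℝ^4 has exactly one point in each of the 8 even-parity open orthants of ℝ^4, and all 8 points have the same ℓ_1-norm. Explicitly, one may take W with rows (−1,−1,−1,1), (−1,−1,1,−1), (−1,1,−1,−1) and B = (3/2, 1/2, 1/2, 1/2). -/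
noncomputable def Wm : Fin 3 → Fin 4 → ℝ := ![![-1, -1, -1, 1], ![-1, -1, 1, -1], ![-1, 1, -1, -1]]
noncomputable def Bv : Fin 4 → ℝ := ![3 / 2, 1 / 2, 1 / 2, 1 / 2]

noncomputable def valZ (h : Fin 3 → Bool) (j : Fin 4) : ℝ :=
  (∑ i, (if h i then Wm i j else 0)) + Bv j

def sgnZ (h : Fin 3 → Bool) : Fin 4 → Bool :=
  ![!(h 0 && h 1 || h 0 && h 2 || h 1 && h 2),
    (!(h 0) && !(h 1)) || (h 2 && !(h 0 && h 1)),
    (!(h 0) && !(h 2)) || (h 1 && !(h 0 && h 2)),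
    (!(h 1) && !(h 2)) || (h 0 && !(h 1 && h 2))]

lemma sgn_spec (h : Fin 3 → Bool) (j : Fin 4) :
    (sgnZ h j = true → 0 < valZ h j) ∧ (sgnZ h j = false → valZ h j < 0) := by
  rcases Bool.dichotomy (h 0) with h0 | h0 <;> rcases Bool.dichotomy (h 1) with h1 | h1 <;>
    rcases Bool.dichotomy (h 2) with h2 | h2 <;> fin_cases j <;>
    simp [valZ, sgnZ, Fin.sum_univ_three, Wm, Bv, h0, h1, h2, Matrix.vecHead, Matrix.vecTail] <;>
    norm_num

lemma sgn_unique (h : Fin 3 → Bool) (s : Fin 4 → Bool)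
    (hc : ∀ j, (s j = true → 0 < valZ h j) ∧ (s j = false → valZ h j < 0)) :
    s = sgnZ h := by
  funext j
  rcases Bool.dichotomy (s j) with hs | hs <;> rcases Bool.dichotomy (sgnZ h j) with hg | hg
  · rw [hs, hg]
  · exact absurd ((sgn_spec h j).1 hg) (not_lt.2 ((hc j).2 hs).le)
  · exact absurd ((sgn_spec h j).2 hg) (not_lt.2 ((hc j).1 hs).le)
  · rw [hs, hg]

lemma sgn_inj : Function.Injective sgnZ := by decide

lemma sgn_surj_even : ∀ s : Fin 4 → Bool,
    Even (Finset.univ.filter (fun j => s j = true)).card → ∃ h, sgnZ h = s := by decide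

lemma sgn_even (h : Fin 3 → Bool) :
    Even (Finset.univ.filter (fun j => sgnZ h j = true)).card := by revert h; decide

lemma l1_val (h : Fin 3 → Bool) : ∑ j, |valZ h j| = 3 := by
  rcases Bool.dichotomy (h 0) with h0 | h0 <;> rcases Bool.dichotomy (h 1) with h1 | h1 <;>
    rcases Bool.dichotomy (h 2) with h2 | h2 <;>
    simp [valZ, Fin.sum_univ_three, Fin.sum_univ_four, Wm, Bv, h0, h1, h2,
      Matrix.vecHead, Matrix.vecTail, abs] <;> norm_num



/-- There exist `W ∈ ℝ^{3×4}` and `B ∈ ℝ^4` (explicitly, `W` with rows `(-1,-1,-1,1)`,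
`(-1,-1,1,-1)`, `(-1,1,-1,-1)` and `B = (3/2,1/2,1/2,1/2)`) such that the `3`-zonoset
`{h^⊤W + B : h ∈ {0,1}^3}` has exactly one point in each of the `8` even-parity open
orthants of `ℝ^4`, and all `8` points have the same `ℓ₁`-norm. -/
theorem explicit_zonoset_even_orthants_R4 :
    ∃ (W : Fin 3 → Fin 4 → ℝ) (B : Fin 4 → ℝ),
      W = ![![-1, -1, -1, 1], ![-1, -1, 1, -1], ![-1, 1, -1, -1]] ∧
      B = ![3 / 2, 1 / 2, 1 / 2, 1 / 2] ∧
      (∀ (h : Fin 3 → Bool) (j : Fin 4), (∑ i, (if h i then W i j else 0)) + B j ≠ 0) ∧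
      (∀ s : Fin 4 → Bool, Even (Finset.univ.filter (fun j => s j = true)).card →
        ∃! h : Fin 3 → Bool, ∀ j,
          (s j = true → 0 < (∑ i, (if h i then W i j else 0)) + B j) ∧
          (s j = false → (∑ i, (if h i then W i j else 0)) + B j < 0)) ∧
      (∀ h : Fin 3 → Bool, ∃ s : Fin 4 → Bool,
        Even (Finset.univ.filter (fun j => s j = true)).card ∧
        ∀ j, (s j = true → 0 < (∑ i, (if h i then W i j else 0)) + B j) ∧
          (s j = false → (∑ i, (if h i then W i j else 0)) + B j < 0)) ∧
      (∀ h h' : Fin 3 → Bool,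
        ∑ j, |(∑ i, (if h i then W i j else 0)) + B j| =
        ∑ j, |(∑ i, (if h' i then W i j else 0)) + B j|) := by
  refine ⟨Wm, Bv, rfl, rfl, ?_, ?_, ?_, ?_⟩
  · intro h j
    rcases (sgn_spec h j) with ⟨hp, hn⟩
    rcases Bool.dichotomy (sgnZ h j) with hg | hg
    · exact ne_of_lt (hn hg)
    · exact (ne_of_gt (hp hg))
  · intro s hs
    obtain ⟨h, hh⟩ := sgn_surj_even s hs
    refine ⟨h, fun j => by rw [← hh]; exact sgn_spec h j, fun h' hc => ?_⟩
    exact sgn_inj ((sgn_unique h' s hc).symm.trans hh.symm ▸ rfl)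
  · intro h
    exact ⟨sgnZ h, sgn_even h, sgn_spec h⟩
  · intro h h'
    exact (l1_val h).trans (l1_val h').symm
end

section
/- Suppose for i = 1,...,k there are W^{(i)} ∈ ℝ^{m_i×n_i}, B^{(i)} ∈ ℝ^{n_i} whose zonosets {h^⊤W^{(i)} + (B^{(i)})^⊤ : h ∈ {0,1}^{m_i}} intersect exactly K_i even-parity open orthants of ℝ^{n_i}. Then the block-diagonal matrix W = diag(W^{(1)},...,W^{(k)}) and concatenated B = (B^{(1)},...,B^{(k)}) generate a zonoset in ℝ^{n_1+⋯+n_k} intersecting at least ∏_i K_i even-parity open orthants of ℝ^{n_1+⋯+n_k}. -/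
/-- If for each `i` the zonoset generated by `W⁽ⁱ⁾, B⁽ⁱ⁾` intersects exactly `K i`
even-parity open orthants of `ℝ^{n i}`, then the block-diagonal matrix `W` and
concatenated `B` generate a zonoset in `ℝ^{n 1 + ⋯ + n k}` intersecting at least
`∏ i, K i` even-parity open orthants. -/
theorem block_diagonal_zonoset_orthants
    (k : ℕ) (n m : Fin k → ℕ) (K : Fin k → ℕ)
    (W : ∀ i, Fin (m i) → Fin (n i) → ℝ) (B : ∀ i, Fin (n i) → ℝ)
    (hK : ∀ i : Fin k,
      {s : Fin (n i) → Bool |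
        Even (Finset.univ.filter (fun j => s j = true)).card ∧
        ∃ h : Fin (m i) → Bool, ∀ j,
          (s j = true → 0 < (∑ t, (if h t then W i t j else 0)) + B i j) ∧
          (s j = false → (∑ t, (if h t then W i t j else 0)) + B i j < 0)}.ncard = K i) :
    ∏ i, K i ≤
      {s : (Σ i : Fin k, Fin (n i)) → Bool |
        Even (Finset.univ.filter (fun j => s j = true)).card ∧
        ∃ h : (Σ i : Fin k, Fin (m i)) → Bool, ∀ j : Σ i : Fin k, Fin (n i),
          (s j = true →
            0 < (∑ t : Fin (m j.1), (if h ⟨j.1, t⟩ then W j.1 t j.2 else 0)) + B j.1 j.2) ∧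
          (s j = false →
            (∑ t : Fin (m j.1), (if h ⟨j.1, t⟩ then W j.1 t j.2 else 0)) + B j.1 j.2 < 0)}.ncard := by
  classical
  set S : ∀ i : Fin k, Set (Fin (n i) → Bool) := fun i =>
    {s : Fin (n i) → Bool |
      Even (Finset.univ.filter (fun j => s j = true)).card ∧
      ∃ h : Fin (m i) → Bool, ∀ j,
        (s j = true → 0 < (∑ t, (if h t then W i t j else 0)) + B i j) ∧
        (s j = false → (∑ t, (if h t then W i t j else 0)) + B i j < 0)} with hS
  set T : Set ((Σ i : Fin k, Fin (n i)) → Bool) :=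
    {s : (Σ i : Fin k, Fin (n i)) → Bool |
      Even (Finset.univ.filter (fun j => s j = true)).card ∧
      ∃ h : (Σ i : Fin k, Fin (m i)) → Bool, ∀ j : Σ i : Fin k, Fin (n i),
        (s j = true →
          0 < (∑ t : Fin (m j.1), (if h ⟨j.1, t⟩ then W j.1 t j.2 else 0)) + B j.1 j.2) ∧
        (s j = false →
          (∑ t : Fin (m j.1), (if h ⟨j.1, t⟩ then W j.1 t j.2 else 0)) + B j.1 j.2 < 0)} with hT
  -- the combining map
  have exF : ∀ s : ∀ i, S i, (fun j : Σ i : Fin k, Fin (n i) => (s j.1 : Fin (n j.1) → Bool) j.2) ∈ T := by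
    intro s
    constructor
    · -- parity
      have hset : (Finset.univ.filter
          (fun j : Σ i : Fin k, Fin (n i) => (s j.1 : Fin (n j.1) → Bool) j.2 = true))
          = Finset.univ.sigma (fun i => Finset.univ.filter fun x => (s i : Fin (n i) → Bool) x = true) := by
        ext ⟨i, x⟩; simp
      rw [hset, Finset.card_sigma]
      exact Finset.even_sum _ (fun i _ => (s i).2.1)
    · choose h hh using fun i => (s i).2.2
      refine ⟨fun t => h t.1 t.2, ?_⟩
      rintro ⟨i, j⟩
      exact hh i j
  let F : (∀ i, S i) → T := fun s => ⟨_, exF s⟩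
  have hFinj : Function.Injective F := by
    intro s t hst
    have : ∀ j : Σ i : Fin k, Fin (n i), (s j.1 : Fin (n j.1) → Bool) j.2 = (t j.1 : Fin (n j.1) → Bool) j.2 :=
      fun j => congrFun (congrArg Subtype.val hst) j
    funext i
    exact Subtype.ext (funext fun x => this ⟨i, x⟩)
  calc ∏ i, K i = ∏ i, Nat.card (S i) := by
        refine Finset.prod_congr rfl fun i _ => ?_
        rw [Nat.card_coe_set_eq, hK i]
    _ = Nat.card (∀ i, S i) := Nat.card_pi.symm
    _ ≤ Nat.card T := Nat.card_le_card_of_injective F hFinj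
    _ = T.ncard := (Nat.card_coe_set_eq T)
end
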